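/- arXiv:1206.2054 — 12 statements merged into one kernel-verified Lean document; each statement's English description precedes it below -/
import Mathlib

section
/- Let q ≥ 1 be an integer and let λ > μ > 0 be real numbers. Then (λ^q − μ^q)/(λ − μ) ≥ (2^{(q−1)/2} / max_{0 ≤ l ≤ q−1} binom(q−1, l)) · (λμ)^{(q−1)/2}. -/
/-!
Writing `(λ^q - μ^q)/(λ - μ) = ∑_{i<q} λ^i μ^(q-1-i)` and pairing the `i`-th term with the
`(q-1-i)`-th, AM–GM bounds each pair from below by `2 √((λμ)^(q-1))`, so the sum is at least
`q (λμ)^((q-1)/2)`. On the other hand the `q` binomial coefficients `(q-1).choose l` sum to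
`2^(q-1)`, so their maximum `M` satisfies `2^((q-1)/2) ≤ 2^(q-1) ≤ q M`.
-/

open Finset

lemma Real.rpow_sub_one_div_two_eq_sqrt_pow {r : ℝ} (hr : 0 ≤ r) {q : ℕ} (hq : 1 ≤ q) :
    r ^ (((q : ℝ) - 1) / 2) = √(r ^ (q - 1)) := by
  rw [Real.sqrt_eq_rpow, ← Real.rpow_natCast, ← Real.rpow_mul hr, Nat.cast_sub hq, Nat.cast_one,
    div_eq_mul_one_div]

lemma Real.two_mul_sqrt_mul_le_add {a b : ℝ} (ha : 0 ≤ a) (hb : 0 ≤ b) :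
    2 * √(a * b) ≤ a + b := by
  rw [Real.sqrt_mul ha]
  nlinarith [sq_nonneg (√a - √b), Real.sq_sqrt ha, Real.sq_sqrt hb]

lemma card_mul_sqrt_pow_le_geom_sum₂ {x y : ℝ} (hx : 0 ≤ x) (hy : 0 ≤ y) (n : ℕ) :
    n * √((x * y) ^ (n - 1)) ≤ ∑ i ∈ range n, x ^ i * y ^ (n - 1 - i) := by
  have hpair : ∀ i ∈ range n,
      2 * √((x * y) ^ (n - 1)) ≤ x ^ i * y ^ (n - 1 - i) + y ^ i * x ^ (n - 1 - i) := by
    intro i hi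
    have hin : i ≤ n - 1 := Nat.le_sub_one_of_lt (mem_range.1 hi)
    have hprod : x ^ i * y ^ (n - 1 - i) * (y ^ i * x ^ (n - 1 - i)) = (x * y) ^ (n - 1) := by
      rw [mul_pow, ← pow_mul_pow_sub x hin, ← pow_mul_pow_sub y hin]
      ring
    rw [← hprod]
    exact Real.two_mul_sqrt_mul_le_add (by positivity) (by positivity)
  have h := card_nsmul_le_sum _ _ _ hpair
  rw [sum_add_distrib, geom_sum₂_comm y x, card_range, nsmul_eq_mul] at h
  linarith

lemma two_pow_le_mul_sup_choose {q : ℕ} (hq : 1 ≤ q) :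
    2 ^ (q - 1) ≤ q * (range q).sup fun l => (q - 1).choose l := by
  calc 2 ^ (q - 1) = ∑ l ∈ range q, (q - 1).choose l := by
        rw [← Nat.sum_range_choose, Nat.sub_add_cancel hq]
    _ ≤ #(range q) • (range q).sup fun l => (q - 1).choose l :=
        sum_le_card_nsmul _ _ _ fun _ hl => le_sup hl
    _ = q * (range q).sup fun l => (q - 1).choose l := by rw [card_range, smul_eq_mul]

lemma sqrt_two_pow_div_sup_choose_le {q : ℕ} (hq : 1 ≤ q) :
    √(2 ^ (q - 1)) / (((range q).sup fun l => (q - 1).choose l : ℕ) : ℝ) ≤ q := by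
  have hM : 0 < (range q).sup fun l => (q - 1).choose l :=
    (Nat.choose_pos (Nat.zero_le _)).trans_le (le_sup (f := fun l => (q - 1).choose l)
      (mem_range.2 hq))
  rw [div_le_iff₀ (by exact_mod_cast hM)]
  calc √(2 ^ (q - 1)) ≤ 2 ^ (q - 1) := Real.sqrt_le_self_iff.2 (Or.inr (one_le_pow₀ one_le_two))
    _ ≤ _ := by exact_mod_cast two_pow_le_mul_sup_choose hq

/-- Let `q ≥ 1` be an integer and `λ > μ > 0` real numbers. Then
`(λ^q − μ^q)/(λ − μ) ≥ (2^{(q−1)/2} / max_{0 ≤ l ≤ q−1} binom(q−1,l)) · (λμ)^{(q−1)/2}`. -/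
theorem stmt_0 (q : ℕ) (hq : 1 ≤ q) (lam mu : ℝ) (hmu : 0 < mu) (hlm : mu < lam) :
    (lam ^ q - mu ^ q) / (lam - mu) ≥
      (2 : ℝ) ^ (((q : ℝ) - 1) / 2) /
          (((Finset.range q).sup fun l => (q - 1).choose l : ℕ) : ℝ) *
        (lam * mu) ^ (((q : ℝ) - 1) / 2) := by
  have hlam : 0 < lam := hmu.trans hlm
  have hgeom : (lam ^ q - mu ^ q) / (lam - mu) = ∑ i ∈ range q, lam ^ i * mu ^ (q - 1 - i) := by
    rw [div_eq_iff (sub_ne_zero.2 hlm.ne'), geom_sum₂_mul]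
  rw [ge_iff_le, hgeom, Real.rpow_sub_one_div_two_eq_sqrt_pow zero_le_two hq,
    Real.rpow_sub_one_div_two_eq_sqrt_pow (mul_pos hlam hmu).le hq]
  calc _ ≤ q * √((lam * mu) ^ (q - 1)) :=
        mul_le_mul_of_nonneg_right (sqrt_two_pow_div_sup_choose_le hq) (Real.sqrt_nonneg _)
    _ ≤ _ := card_mul_sqrt_pow_le_geom_sum₂ hlam.le hmu.le q
end

section
/- Let q ≥ 1 and p ≥ 1 be integers and let λ_1 > λ_2 > … > λ_p > 0 be real numbers. Then ∏_{1 ≤ i < j ≤ p} (λ_i^q − λ_j^q)/(λ_i − λ_j) ≥ (2^{(q−1)/2} / max_{0 ≤ l ≤ q−1} binom(q−1, l))^{p(p−1)/2} · (∏_{i=1}^p λ_i)^{(q−1)(p−1)/2}. -/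
/-!
Each factor is the geometric sum `∑_{l<q} λ_i^l λ_j^(q-1-l)`. Pairing the terms `l` and `q-1-l`
and applying AM-GM to each pair bounds it below by `q (λ_i λ_j)^((q-1)/2)`. Since
`∑_l binom(q-1, l) = 2^(q-1)`, the maximal binomial coefficient is at least `2^(q-1)/q`, so the
constant `2^((q-1)/2) / max_l binom(q-1, l)` is at most `q`. Multiplying over the `p(p-1)/2`
pairs `i < j`, every `λ_i` occurs in exactly `p-1` of them.
-/

open Finset Real

section OrderedRing

variable {R : Type*} [CommRing R] [LinearOrder R] [IsStrictOrderedRing R]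

theorem two_mul_mul_pow_le_add {s t : R} {n l : ℕ} (hl : l ≤ n) :
    2 * (s * t) ^ n ≤ (s ^ 2) ^ l * (t ^ 2) ^ (n - l) + (s ^ 2) ^ (n - l) * (t ^ 2) ^ l := by
  have hs : s ^ n = s ^ l * s ^ (n - l) := by rw [← pow_add, Nat.add_sub_cancel' hl]
  have ht : t ^ n = t ^ l * t ^ (n - l) := by rw [← pow_add, Nat.add_sub_cancel' hl]
  rw [mul_pow, hs, ht]
  linear_combination sq_nonneg (s ^ l * t ^ (n - l) - s ^ (n - l) * t ^ l)

theorem succ_mul_mul_pow_le_sum (s t : R) (n : ℕ) :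
    (n + 1 : R) * (s * t) ^ n ≤ ∑ i ∈ range (n + 1), (s ^ 2) ^ i * (t ^ 2) ^ (n - i) := by
  have hreflect : ∑ i ∈ range (n + 1), (s ^ 2) ^ (n - i) * (t ^ 2) ^ i
      = ∑ i ∈ range (n + 1), (s ^ 2) ^ i * (t ^ 2) ^ (n - i) := by
    rw [← sum_range_reflect]
    refine sum_congr rfl fun i hi => ?_
    rw [Nat.add_sub_cancel, Nat.sub_sub_self (Nat.lt_succ_iff.1 (mem_range.1 hi))]
  have hpairs : ∑ _i ∈ range (n + 1), 2 * (s * t) ^ n ≤ ∑ i ∈ range (n + 1),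
      ((s ^ 2) ^ i * (t ^ 2) ^ (n - i) + (s ^ 2) ^ (n - i) * (t ^ 2) ^ i) :=
    sum_le_sum fun i hi => two_mul_mul_pow_le_add (Nat.lt_succ_iff.1 (mem_range.1 hi))
  rw [sum_add_distrib, hreflect, sum_const, card_range, nsmul_eq_mul] at hpairs
  push_cast at hpairs
  linarith

end OrderedRing

theorem two_pow_le_succ_mul_sup_choose (n : ℕ) :
    2 ^ n ≤ (n + 1) * (range (n + 1)).sup n.choose :=
  calc 2 ^ n = ∑ l ∈ range (n + 1), n.choose l := (Nat.sum_range_choose n).symm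
    _ ≤ #(range (n + 1)) • (range (n + 1)).sup n.choose :=
      sum_le_card_nsmul _ _ _ fun _ hl => le_sup hl
    _ = (n + 1) * (range (n + 1)).sup n.choose := by rw [card_range, smul_eq_mul]

theorem natCast_mul_rpow_le_pow_sub_pow_div_sub {x y : ℝ} (hx : 0 ≤ x) (hy : 0 ≤ y)
    (hxy : x ≠ y) {q : ℕ} (hq : 1 ≤ q) :
    q * (x * y) ^ (((q : ℝ) - 1) / 2) ≤ (x ^ q - y ^ q) / (x - y) := by
  obtain ⟨n, rfl⟩ := Nat.exists_eq_add_of_le' hq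
  have hrpow : (x * y) ^ ((((n + 1 : ℕ) : ℝ) - 1) / 2) = (√x * √y) ^ n := by
    rw [← sqrt_mul hx, sqrt_eq_rpow, ← rpow_natCast, ← rpow_mul (mul_nonneg hx hy)]
    push_cast
    ring_nf
  have hgeom : (x ^ (n + 1) - y ^ (n + 1)) / (x - y)
      = ∑ i ∈ range (n + 1), (√x ^ 2) ^ i * (√y ^ 2) ^ (n - i) := by
    rw [div_eq_iff (sub_ne_zero.2 hxy), ← geom_sum₂_mul, sq_sqrt hx, sq_sqrt hy]
    simp
  rw [hrpow, hgeom]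
  exact_mod_cast succ_mul_mul_pow_le_sum (√x) (√y) n

theorem two_rpow_div_sup_choose_le {q : ℕ} (hq : 1 ≤ q) :
    (2 : ℝ) ^ (((q : ℝ) - 1) / 2) / (((range q).sup fun l => (q - 1).choose l : ℕ) : ℝ)
      ≤ q := by
  obtain ⟨n, rfl⟩ := Nat.exists_eq_add_of_le' hq
  simp only [Nat.add_sub_cancel]
  have hsup : 0 < (range (n + 1)).sup n.choose :=
    (n.choose_pos n.zero_le).trans_le (le_sup (f := n.choose) (mem_range.2 n.succ_pos))
  rw [div_le_iff₀ (by exact_mod_cast hsup)]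
  calc (2 : ℝ) ^ ((((n + 1 : ℕ) : ℝ) - 1) / 2) ≤ 2 ^ (n : ℝ) :=
        rpow_le_rpow_of_exponent_le one_le_two (by push_cast; linarith [n.cast_nonneg (α := ℝ)])
    _ = 2 ^ n := rpow_natCast 2 n
    _ ≤ (((n + 1) * (range (n + 1)).sup n.choose : ℕ) : ℝ) := by
        exact_mod_cast two_pow_le_succ_mul_sup_choose n
    _ = _ := by push_cast; ring

section PairProducts

variable {α : Type*} [Fintype α] [LinearOrder α] [LocallyFiniteOrderTop α]
  [LocallyFiniteOrderBot α]

theorem prod_prod_Ioi_mul_eq_prod_pow {M : Type*} [CommMonoid M] (f : α → M) :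
    ∏ i, ∏ j ∈ Ioi i, f i * f j = (∏ i, f i) ^ (Fintype.card α - 1) := by
  rw [prod_prod_Ioi_mul_eq_prod_prod_off_diag (fun _ j => f j)]
  simp [prod_const, card_compl, prod_pow]

theorem sum_card_Ioi : ∑ i : α, #(Ioi i) = Fintype.card α * (Fintype.card α - 1) / 2 := by
  have h := sum_sum_Ioi_add_eq_sum_sum_off_diag (fun (_ _ : α) => 1)
  simp only [Nat.reduceAdd, sum_const, card_compl, card_singleton, card_univ, smul_eq_mul,
    mul_one] at h
  rw [← h, ← sum_mul, Nat.mul_div_cancel _ two_pos]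

end PairProducts

/-- Let `q ≥ 1`, `p ≥ 1` be integers and `λ_1 > … > λ_p > 0` reals. Then
`∏_{i<j} (λ_i^q − λ_j^q)/(λ_i − λ_j)
  ≥ (2^{(q−1)/2}/max_l binom(q−1,l))^{p(p−1)/2} · (∏ λ_i)^{(q−1)(p−1)/2}`. -/
theorem stmt_1 (q p : ℕ) (hq : 1 ≤ q) (hp : 1 ≤ p) (lam : Fin p → ℝ)
    (hanti : StrictAnti lam) (hpos : ∀ i, 0 < lam i) :
    (∏ i : Fin p, ∏ j ∈ Finset.Ioi i, (lam i ^ q - lam j ^ q) / (lam i - lam j)) ≥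
      ((2 : ℝ) ^ (((q : ℝ) - 1) / 2) /
            (((Finset.range q).sup fun l => (q - 1).choose l : ℕ) : ℝ)) ^ (p * (p - 1) / 2) *
        (∏ i : Fin p, lam i) ^ (((q : ℝ) - 1) * ((p : ℝ) - 1) / 2) := by
  set e : ℝ := ((q : ℝ) - 1) / 2
  set C : ℝ := 2 ^ e / (((range q).sup fun l => (q - 1).choose l : ℕ) : ℝ)
  have hrhs : C ^ (p * (p - 1) / 2) * (∏ i, lam i) ^ (((q : ℝ) - 1) * ((p : ℝ) - 1) / 2)
      = ∏ i, ∏ j ∈ Ioi i, C * (lam i * lam j) ^ e := by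
    have hexp : ((q : ℝ) - 1) * ((p : ℝ) - 1) / 2 = e * (p - 1 : ℕ) := by
      rw [Nat.cast_sub hp]; ring
    simp_rw [prod_mul_distrib, prod_const, prod_pow_eq_pow_sum, sum_card_Ioi,
      mul_rpow (hpos _).le (hpos _).le, prod_prod_Ioi_mul_eq_prod_pow, Fintype.card_fin, hexp,
      rpow_mul_natCast (prod_pos fun i _ => hpos i).le, finsetProd_rpow _ _ fun i _ => (hpos i).le]
  rw [ge_iff_le, hrhs]
  have hpow_nonneg : ∀ i j, 0 ≤ (lam i * lam j) ^ e := fun i j =>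
    rpow_nonneg (mul_pos (hpos i) (hpos j)).le e
  have hterm_nonneg : ∀ i j, 0 ≤ C * (lam i * lam j) ^ e := fun i j =>
    mul_nonneg (by positivity) (hpow_nonneg i j)
  refine prod_le_prod (fun i _ => prod_nonneg fun j _ => hterm_nonneg i j) fun i _ =>
    prod_le_prod (fun j _ => hterm_nonneg i j) fun j hj => ?_
  calc C * (lam i * lam j) ^ e ≤ q * (lam i * lam j) ^ e :=
        mul_le_mul_of_nonneg_right (two_rpow_div_sup_choose_le hq) (hpow_nonneg i j)
    _ ≤ (lam i ^ q - lam j ^ q) / (lam i - lam j) :=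
        natCast_mul_rpow_le_pow_sub_pow_div_sub (hpos i).le (hpos j).le
          (hanti (mem_Ioi.1 hj)).ne' hq
end

section
/- Let C be a real symmetric positive definite p×p matrix and let c > 0. Then the function f(B) = tr(B^{−1} C) + c · log det B, defined on the set of real symmetric positive definite p×p matrices, attains a strict global minimum at B = (1/c) · C; that is, f((1/c)·C) < f(B) for every symmetric positive definite B ≠ (1/c)·C. -/
/-!
With `R = B^{-1/2}`, the matrix `M = c⁻¹ • R C R` is positive definite, `tr M = c⁻¹ tr(B⁻¹ C)` and
`det M = c^{-p} det C / det B`, so that `f(B) - f(C / c) = c (tr M - log det M - p)`. Summing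
`log λ ≤ λ - 1` over the eigenvalues of `M` shows this is positive unless every eigenvalue is `1`,
i.e. unless `M = 1`, which means `B = C / c`.
-/

open Matrix
open scoped MatrixOrder

namespace Matrix

variable {n : Type*} [Fintype n] [DecidableEq n]

theorem IsHermitian.eq_one_of_eigenvalues_eq_one {𝕜 : Type*} [RCLike 𝕜] {A : Matrix n n 𝕜}
    (hA : A.IsHermitian) (h : hA.eigenvalues = 1) : A = 1 := by
  rw [hA.spectral_theorem, h]
  simp

theorem PosDef.log_det_lt_trace_sub_card {M : Matrix n n ℝ} (hM : M.PosDef) (hM1 : M ≠ 1) :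
    Real.log M.det < M.trace - Fintype.card n := by
  set μ := hM.isHermitian.eigenvalues
  obtain ⟨i, hi⟩ : ∃ i, μ i ≠ 1 := by
    by_contra! h
    exact hM1 (hM.isHermitian.eq_one_of_eigenvalues_eq_one (funext h))
  have hμ : ∀ j, 0 < μ j := hM.eigenvalues_pos
  calc Real.log M.det = ∑ j, Real.log (μ j) := by
        simp only [hM.isHermitian.det_eq_prod_eigenvalues, RCLike.ofReal_real_eq_id, id_eq]
        exact Real.log_prod fun j _ ↦ (hμ j).ne'
    _ < ∑ j, (μ j - 1) :=
        Finset.sum_lt_sum (fun j _ ↦ Real.log_le_sub_one_of_pos (hμ j))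
          ⟨i, Finset.mem_univ i, Real.log_lt_sub_one_of_pos (hμ i) hi⟩
    _ = M.trace - Fintype.card n := by
        simp [hM.isHermitian.trace_eq_sum_eigenvalues, μ]

theorem inv_smul_mul_self {K : Type*} [Field K] {A : Matrix n n K} (hA : IsUnit A.det) {a : K}
    (ha : a ≠ 0) : (a • A)⁻¹ * A = a⁻¹ • 1 := by
  have hunit : IsUnit (a • A).det := by
    rw [det_smul]
    exact (isUnit_iff_ne_zero.mpr (pow_ne_zero _ ha)).mul hA
  calc (a • A)⁻¹ * A = (a • A)⁻¹ * (a⁻¹ • a • A) := by rw [inv_smul_smul₀ ha]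
    _ = a⁻¹ • 1 := by rw [Matrix.mul_smul, nonsing_inv_mul _ hunit]

variable {B C : Matrix n n ℝ}

theorem isUnit_sqrt_inv (hB : B.PosDef) : IsUnit (CFC.sqrt B⁻¹) :=
  isUnit_of_mul_isUnit_left ((CFC.sqrt_mul_sqrt_self B⁻¹ hB.inv.posSemidef.nonneg).symm ▸
    hB.inv.isUnit)

theorem PosDef.sqrt_inv_mul_mul_sqrt_inv (hB : B.PosDef) (hC : C.PosDef) :
    (CFC.sqrt B⁻¹ * C * CFC.sqrt B⁻¹).PosDef := by
  have hR : (CFC.sqrt B⁻¹).IsHermitian := (CFC.sqrt_nonneg B⁻¹).posSemidef.isHermitian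
  simpa only [hR.eq] using
    hC.conjTranspose_mul_mul_same (mulVec_injective_iff_isUnit.mpr (isUnit_sqrt_inv hB))

theorem trace_sqrt_inv_mul_mul_sqrt_inv (hB : B.PosSemidef) :
    (CFC.sqrt B⁻¹ * C * CFC.sqrt B⁻¹).trace = (B⁻¹ * C).trace := by
  rw [trace_mul_comm, ← Matrix.mul_assoc, CFC.sqrt_mul_sqrt_self B⁻¹ hB.inv.nonneg]

theorem det_sqrt_inv_mul_mul_sqrt_inv (hB : B.PosSemidef) :
    (CFC.sqrt B⁻¹ * C * CFC.sqrt B⁻¹).det = C.det / B.det := by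
  rw [det_mul, det_mul, mul_right_comm, ← det_mul, CFC.sqrt_mul_sqrt_self B⁻¹ hB.inv.nonneg,
    det_nonsing_inv, Ring.inverse_eq_inv', inv_mul_eq_div]

theorem eq_smul_of_sqrt_inv_mul_mul_sqrt_inv_eq_smul_one (hB : B.PosDef) {c : ℝ}
    (h : CFC.sqrt B⁻¹ * C * CFC.sqrt B⁻¹ = c • 1) : C = c • B := by
  set R := CFC.sqrt B⁻¹
  have hR : IsUnit R.det := (isUnit_iff_isUnit_det R).mp (isUnit_sqrt_inv hB)
  calc C = R⁻¹ * (R * C * R) * R⁻¹ := by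
        rw [← Matrix.mul_assoc, ← Matrix.mul_assoc, nonsing_inv_mul _ hR, Matrix.one_mul,
          Matrix.mul_assoc, mul_nonsing_inv _ hR, Matrix.mul_one]
    _ = c • B := by
        rw [h, Matrix.mul_smul, Matrix.mul_one, Matrix.smul_mul, ← mul_inv_rev,
          CFC.sqrt_mul_sqrt_self B⁻¹ hB.inv.posSemidef.nonneg,
          nonsing_inv_nonsing_inv B ((isUnit_iff_isUnit_det B).mp hB.isUnit)]

end Matrix

/-- Let `C` be a real symmetric positive definite `p × p` matrix and `c > 0`. Then
`f(B) = tr(B⁻¹ C) + c · log det B` on positive definite matrices attains a strict global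
minimum at `B = (1/c) · C`. -/
theorem stmt_3 (p : ℕ) (C : Matrix (Fin p) (Fin p) ℝ) (hC : C.PosDef) (c : ℝ) (hc : 0 < c)
    (B : Matrix (Fin p) (Fin p) ℝ) (hB : B.PosDef) (hne : B ≠ (1 / c) • C) :
    (((1 / c) • C)⁻¹ * C).trace + c * Real.log ((1 / c) • C).det <
      (B⁻¹ * C).trace + c * Real.log B.det := by
  set M := c⁻¹ • (CFC.sqrt B⁻¹ * C * CFC.sqrt B⁻¹)
  have hM : M.PosDef := (hB.sqrt_inv_mul_mul_sqrt_inv hC).smul (inv_pos.mpr hc)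
  have hM1 : M ≠ 1 := by
    intro h
    have hCB : C = c • B :=
      eq_smul_of_sqrt_inv_mul_mul_sqrt_inv_eq_smul_one hB (by rw [← h, smul_inv_smul₀ hc.ne'])
    exact hne (by rw [hCB, smul_smul, one_div_mul_cancel hc.ne', one_smul])
  have htr : M.trace = c⁻¹ * (B⁻¹ * C).trace := by
    rw [trace_smul, trace_sqrt_inv_mul_mul_sqrt_inv hB.posSemidef, smul_eq_mul]
  have hlogdet : Real.log M.det = Real.log C.det - Real.log B.det - p * Real.log c := by
    rw [det_smul, det_sqrt_inv_mul_mul_sqrt_inv hB.posSemidef, Fintype.card_fin,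
      Real.log_mul (by positivity) (div_pos hC.det_pos hB.det_pos).ne',
      Real.log_div hC.det_pos.ne' hB.det_pos.ne', Real.log_pow, Real.log_inv]
    ring
  have key := hM.log_det_lt_trace_sub_card hM1
  rw [htr, hlogdet, Fintype.card_fin] at key
  rw [inv_smul_mul_self ((isUnit_iff_isUnit_det C).mp hC.isUnit) (one_div_pos.mpr hc).ne',
    trace_smul, trace_one, Fintype.card_fin, det_smul, Fintype.card_fin,
    Real.log_mul (by positivity) hC.det_pos.ne', Real.log_pow, one_div, Real.log_inv, inv_inv,
    smul_eq_mul]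
  have := mul_lt_mul_of_pos_left key hc
  rw [mul_sub c (c⁻¹ * _), mul_inv_cancel_left₀ hc.ne'] at this
  linarith
end

section
/- Let p ≥ 1 and q ≥ 1 be integers, m ≥ p a real number, and Ψ a real symmetric positive definite p×p matrix. Define f(B) = tr((Ψ^{−1/2} B Ψ^{−1/2})^{−q}) + (qm + p + 1) · log det B on the set of real symmetric positive definite p×p matrices. Then f attains a strict global minimum at B = (q/(qm+p+1))^{1/q} · Ψ. (Equivalently, the power inverse Wishart density with parameters (Ψ, m, q) has its unique mode at this matrix.) -/
/-!
Whitening by `S = Ψ^{-1/2}` turns `B` into `Y = (S B S)⁻¹`, and since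
`log det B = log det Ψ - log det Y`, the objective becomes
`∑ᵢ (μᵢ ^ q - c log μᵢ) + c log det Ψ` in the eigenvalues `μᵢ` of `Y`, with `c = qm + p + 1`.
Writing `c = q s ^ q`, each summand is minimised exactly at `μᵢ = s`: with `u = (μᵢ / s) ^ q`
its excess over the value at `s` is `s ^ q (u - 1 - log u) ≥ 0`, with equality only for `u = 1`.
So the minimum is attained only at `Y = s • 1`, i.e. at `B = s⁻¹ • Ψ`.
-/

/-- The square root of a positive semidefinite matrix, as defined in the older Mathlib
(removed since then). -/
noncomputable def Matrix.PosSemidef.sqrt {n : Type*} [Fintype n] [DecidableEq n]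
    {A : Matrix n n ℝ} (hA : A.PosSemidef) : Matrix n n ℝ :=
  hA.1.eigenvectorUnitary.1 * Matrix.diagonal ((↑) ∘ (√·) ∘ hA.1.eigenvalues) *
    (star hA.1.eigenvectorUnitary : Matrix n n ℝ)

open Matrix Real
open scoped MatrixOrder

namespace Real

private lemma pow_sub_mul_log_sub_eq (q : ℕ) {s t : ℝ} (hs : 0 < s) (ht : 0 < t) :
    (t ^ q - q * s ^ q * log t) - (s ^ q - q * s ^ q * log s) =
      s ^ q * ((t / s) ^ q - 1 - log ((t / s) ^ q)) := by
  rw [log_pow, log_div ht.ne' hs.ne', div_pow, mul_sub, mul_sub, mul_div_cancel₀ _ (by positivity)]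
  ring

theorem pow_sub_mul_log_le (q : ℕ) {s t : ℝ} (hs : 0 < s) (ht : 0 < t) :
    s ^ q - q * s ^ q * log s ≤ t ^ q - q * s ^ q * log t := by
  have hlog := log_le_sub_one_of_pos (pow_pos (div_pos ht hs) q)
  have hexcess := pow_sub_mul_log_sub_eq q hs ht
  nlinarith [pow_pos hs q]

theorem pow_sub_mul_log_lt {q : ℕ} (hq : q ≠ 0) {s t : ℝ} (hs : 0 < s) (ht : 0 < t)
    (hts : t ≠ s) : s ^ q - q * s ^ q * log s < t ^ q - q * s ^ q * log t := by
  have hpow : (t / s) ^ q ≠ 1 := by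
    rw [Ne, pow_eq_one_iff_of_nonneg (div_pos ht hs).le hq, div_eq_one_iff_eq hs.ne']
    exact hts
  have hlog := log_lt_sub_one_of_pos (pow_pos (div_pos ht hs) q) hpow
  have hexcess := pow_sub_mul_log_sub_eq q hs ht
  nlinarith [pow_pos hs q]

end Real

namespace Matrix

variable {n 𝕜 : Type*} [Fintype n] [DecidableEq n] [RCLike 𝕜]

theorem IsHermitian.trace_pow {A : Matrix n n 𝕜} (hA : A.IsHermitian) (k : ℕ) :
    (A ^ k).trace = ∑ i, (hA.eigenvalues i : 𝕜) ^ k := by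
  conv_lhs => rw [hA.spectral_theorem, ← map_pow, diagonal_pow, Unitary.conjStarAlgAut_apply]
  rw [trace_mul_cycle, Unitary.coe_star_mul_self, one_mul, trace_diagonal]
  simp

theorem IsHermitian.eq_smul_one_of_eigenvalues_eq {A : Matrix n n 𝕜} (hA : A.IsHermitian)
    {t : ℝ} (h : ∀ i, hA.eigenvalues i = t) : A = (t : 𝕜) • 1 := by
  have hdiag : diagonal (RCLike.ofReal ∘ fun _ : n => t) = (t : 𝕜) • (1 : Matrix n n 𝕜) := by
    rw [smul_one_eq_diagonal]; rfl
  conv_lhs => rw [hA.spectral_theorem, funext h, hdiag, map_smul, map_one]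

theorem PosDef.trace_pow_sub_mul_log_det_lt {Y : Matrix n n ℝ} (hY : Y.PosDef) {q : ℕ}
    (hq : q ≠ 0) {s : ℝ} (hs : 0 < s) (hne : Y ≠ s • 1) :
    ((s • 1 : Matrix n n ℝ) ^ q).trace - q * s ^ q * log (s • 1 : Matrix n n ℝ).det <
      (Y ^ q).trace - q * s ^ q * log Y.det := by
  obtain ⟨j, hj⟩ : ∃ j, hY.1.eigenvalues j ≠ s := by
    by_contra! h
    exact hne (hY.1.eq_smul_one_of_eigenvalues_eq h)
  have hscalar : ((s • 1 : Matrix n n ℝ) ^ q).trace - q * s ^ q * log (s • 1 : Matrix n n ℝ).det =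
      ∑ _i : n, (s ^ q - q * s ^ q * log s) := by
    rw [smul_pow, one_pow, trace_smul, trace_one, det_smul, det_one, mul_one, log_pow,
      Finset.sum_const, Finset.card_univ, nsmul_eq_mul, smul_eq_mul]
    ring
  have heigen : (Y ^ q).trace - q * s ^ q * log Y.det =
      ∑ i, (hY.1.eigenvalues i ^ q - q * s ^ q * log (hY.1.eigenvalues i)) := by
    rw [hY.1.trace_pow, hY.1.det_eq_prod_eigenvalues, Finset.sum_sub_distrib, ← Finset.mul_sum]
    simp [log_prod fun i _ => (hY.eigenvalues_pos i).ne']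
  rw [hscalar, heigen]
  exact Finset.sum_lt_sum (fun i _ => pow_sub_mul_log_le q hs (hY.eigenvalues_pos i))
    ⟨j, Finset.mem_univ j, pow_sub_mul_log_lt hq hs (hY.eigenvalues_pos j) hj⟩

theorem PosSemidef.sqrt_eq_cfcSqrt {A : Matrix n n ℝ} (hA : A.PosSemidef) :
    hA.sqrt = CFC.sqrt A := by
  rw [CFC.sqrt_eq_cfc, cfc_nnreal_eq_real _ A, hA.1.cfc_eq, IsHermitian.cfc,
    Unitary.conjStarAlgAut_apply, PosSemidef.sqrt]
  congr 3
  funext i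
  simp [Real.coe_sqrt, hA.eigenvalues_nonneg i]

theorem PosDef.isHermitian_sqrt_inv {A : Matrix n n ℝ} (hA : A.PosDef) :
    hA.posSemidef.sqrt⁻¹.IsHermitian := by
  rw [hA.posSemidef.sqrt_eq_cfcSqrt, hA.posSemidef.inv_sqrt]
  exact (CFC.sqrt_nonneg _).posSemidef.isHermitian

theorem PosDef.sqrt_inv_mul_mul_sqrt_inv_s4 {A : Matrix n n ℝ} (hA : A.PosDef) :
    hA.posSemidef.sqrt⁻¹ * A * hA.posSemidef.sqrt⁻¹ = 1 := by
  have hQQ : hA.posSemidef.sqrt * hA.posSemidef.sqrt = A := by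
    rw [hA.posSemidef.sqrt_eq_cfcSqrt]
    exact CFC.sqrt_mul_sqrt_self A hA.posSemidef.nonneg
  set Q := hA.posSemidef.sqrt
  have hQ : IsUnit Q.det := isUnit_det_of_right_inverse (B := Q * A⁻¹) <| by
    rw [← mul_assoc, hQQ, mul_nonsing_inv _ (isUnit_iff_isUnit_det _ |>.1 hA.isUnit)]
  conv_lhs => rw [← hQQ]
  rw [← mul_assoc, nonsing_inv_mul _ hQ, one_mul, mul_nonsing_inv _ hQ]

theorem PosDef.isUnit_sqrt_inv {A : Matrix n n ℝ} (hA : A.PosDef) :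
    IsUnit hA.posSemidef.sqrt⁻¹ :=
  (isUnit_iff_isUnit_det _).2 <|
    isUnit_det_of_right_inverse (B := A * hA.posSemidef.sqrt⁻¹) <| by
      rw [← mul_assoc, hA.sqrt_inv_mul_mul_sqrt_inv_s4]

theorem PosDef.sqrt_inv_mul_mul_sqrt_inv_posDef {A B : Matrix n n ℝ} (hA : A.PosDef)
    (hB : B.PosDef) : (hA.posSemidef.sqrt⁻¹ * B * hA.posSemidef.sqrt⁻¹).PosDef := by
  simpa only [star_eq_conjTranspose, hA.isHermitian_sqrt_inv.eq] using
    (Matrix.IsUnit.posDef_star_left_conjugate_iff hA.isUnit_sqrt_inv).2 hB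

theorem det_eq_det_mul_det_of_mul_mul_eq_one {R : Type*} [CommRing R] {S A : Matrix n n R}
    (hS : S * A * S = 1) (B : Matrix n n R) : B.det = A.det * (S * B * S).det := by
  have h := congrArg det hS
  rw [det_mul, det_mul, det_one] at h
  rw [det_mul, det_mul]
  linear_combination (-B.det) * h

theorem log_det_eq_sub_log_det_inv {S A B : Matrix n n ℝ} (hS : S * A * S = 1) (hB : B.det ≠ 0) :
    log B.det = log A.det - log (S * B * S)⁻¹.det := by
  have h := det_eq_det_mul_det_of_mul_mul_eq_one hS B
  rw [det_nonsing_inv, Ring.inverse_eq_inv', log_inv, h,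
    log_mul (left_ne_zero_of_mul (h ▸ hB)) (right_ne_zero_of_mul (h ▸ hB)), sub_neg_eq_add]

end Matrix

theorem stmt_4_general (p q : ℕ) (hq : 1 ≤ q) (m : ℝ) (hm : (p : ℝ) ≤ m)
    (Ψ : Matrix (Fin p) (Fin p) ℝ) (hΨ : Ψ.PosDef)
    (B : Matrix (Fin p) (Fin p) ℝ) (hB : B.PosDef)
    (hne : B ≠ (((q : ℝ) / ((q : ℝ) * m + (p : ℝ) + 1)) ^ ((1 : ℝ) / (q : ℝ))) • Ψ) :
    ((hΨ.posSemidef.sqrt⁻¹ *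
          ((((q : ℝ) / ((q : ℝ) * m + (p : ℝ) + 1)) ^ ((1 : ℝ) / (q : ℝ))) • Ψ) *
            hΨ.posSemidef.sqrt⁻¹)⁻¹ ^ q).trace +
        ((q : ℝ) * m + (p : ℝ) + 1) *
          Real.log ((((q : ℝ) / ((q : ℝ) * m + (p : ℝ) + 1)) ^ ((1 : ℝ) / (q : ℝ))) • Ψ).det <
      ((hΨ.posSemidef.sqrt⁻¹ * B * hΨ.posSemidef.sqrt⁻¹)⁻¹ ^ q).trace +
        ((q : ℝ) * m + (p : ℝ) + 1) * Real.log B.det := by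
  set c : ℝ := q * m + p + 1
  have hc : 0 < c := by have := (Nat.cast_nonneg p).trans hm; positivity
  set r : ℝ := (q / c) ^ (1 / q : ℝ)
  have hr : 0 < r := by positivity
  have hcr : c = q * r⁻¹ ^ q := by
    have hq0 : (q : ℝ) ≠ 0 := by positivity
    rw [inv_pow, ← rpow_natCast, ← rpow_mul (by positivity), one_div_mul_cancel hq0, rpow_one,
      inv_div, mul_div_cancel₀ _ hq0]
  set S := hΨ.posSemidef.sqrt⁻¹
  have hS : S * Ψ * S = 1 := hΨ.sqrt_inv_mul_mul_sqrt_inv_s4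
  have hSB : (S * B * S).PosDef := hΨ.sqrt_inv_mul_mul_sqrt_inv_posDef hB
  have hmode : (S * (r • Ψ) * S)⁻¹ = r⁻¹ • 1 := by
    rw [Matrix.mul_smul, Matrix.smul_mul, hS]
    exact inv_eq_left_inv <| by rw [smul_mul_smul_comm, inv_mul_cancel₀ hr.ne', one_mul, one_smul]
  have hYne : (S * B * S)⁻¹ ≠ r⁻¹ • 1 := by
    rw [← hmode]
    intro h
    have := inv_inj h ((isUnit_iff_isUnit_det _).1 hSB.isUnit)
    exact hne (hΨ.isUnit_sqrt_inv.mul_left_cancel (hΨ.isUnit_sqrt_inv.mul_right_cancel this))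
  have key := hSB.inv.trace_pow_sub_mul_log_det_lt (Nat.one_le_iff_ne_zero.mp hq)
    (inv_pos.2 hr) hYne
  rw [← hcr, ← hmode] at key
  rw [log_det_eq_sub_log_det_inv hS hB.det_pos.ne',
    log_det_eq_sub_log_det_inv hS (hΨ.smul hr).det_pos.ne']
  linarith

/-- Let `p, q ≥ 1` be integers, `m ≥ p` real, `Ψ` symmetric positive definite.  Then
`f(B) = tr((Ψ^{−1/2} B Ψ^{−1/2})^{−q}) + (qm+p+1)·log det B` on positive definite matrices
attains a strict global minimum at `B = (q/(qm+p+1))^{1/q} · Ψ` (the mode of the power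
inverse Wishart distribution). -/
theorem stmt_4 (p q : ℕ) (hp : 1 ≤ p) (hq : 1 ≤ q) (m : ℝ) (hm : (p : ℝ) ≤ m)
    (Ψ : Matrix (Fin p) (Fin p) ℝ) (hΨ : Ψ.PosDef)
    (B : Matrix (Fin p) (Fin p) ℝ) (hB : B.PosDef)
    (hne : B ≠ (((q : ℝ) / ((q : ℝ) * m + (p : ℝ) + 1)) ^ ((1 : ℝ) / (q : ℝ))) • Ψ) :
    ((hΨ.posSemidef.sqrt⁻¹ *
          ((((q : ℝ) / ((q : ℝ) * m + (p : ℝ) + 1)) ^ ((1 : ℝ) / (q : ℝ))) • Ψ) *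
            hΨ.posSemidef.sqrt⁻¹)⁻¹ ^ q).trace +
        ((q : ℝ) * m + (p : ℝ) + 1) *
          Real.log ((((q : ℝ) / ((q : ℝ) * m + (p : ℝ) + 1)) ^ ((1 : ℝ) / (q : ℝ))) • Ψ).det <
      ((hΨ.posSemidef.sqrt⁻¹ * B * hΨ.posSemidef.sqrt⁻¹)⁻¹ ^ q).trace +
        ((q : ℝ) * m + (p : ℝ) + 1) * Real.log B.det :=
  stmt_4_general p q hq m hm Ψ hΨ B hB hne
end

section
/- Let q ≥ 1 be an integer and let c > 0, d > 0, s ≥ 0 be real numbers. Then there exists exactly one λ > 0 satisfying c·λ^q − s·λ^{q−1} − d = 0. Moreover, the polynomial λ ↦ c·λ^q − s·λ^{q−1} − d is strictly increasing on the set where it is nonnegative, so the root is the unique positive zero. -/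
/-! With `q = n + 1` the equation reads `λ ^ n * (c * λ - s) = d`. Where the left side is at
least `d > 0`, the factor `c * λ - s` must be positive, so the left side is there a product of a
nondecreasing and a strictly increasing positive factor: this gives monotonicity, hence
uniqueness. Existence is the intermediate value theorem on `[0, max 1 ((s + d) / c)]`. -/

theorem strictMonoOn_pow_mul_sub (n : ℕ) {c : ℝ} (hc : 0 < c) (s : ℝ) :
    StrictMonoOn (fun x : ℝ => x ^ n * (c * x - s)) {x | 0 ≤ x ∧ s < c * x} := by
  rintro x ⟨hx, hxs⟩ y - hxy
  exact mul_lt_mul' (pow_le_pow_left₀ hx hxy.le n) (by nlinarith) (by linarith)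
    (pow_pos (hx.trans_lt hxy) n)

theorem lt_mul_of_pos_le_pow_mul_sub {n : ℕ} {c d s x : ℝ} (hd : 0 < d) (hx : 0 ≤ x)
    (h : d ≤ x ^ n * (c * x - s)) : s < c * x := by
  by_contra! hle
  have := mul_nonpos_of_nonneg_of_nonpos (pow_nonneg hx n) (sub_nonpos.2 hle)
  linarith

theorem exists_pos_pow_mul_sub_eq (n : ℕ) {c d s : ℝ} (hc : 0 < c) (hd : 0 < d) (hs : 0 ≤ s) :
    ∃ x, 0 < x ∧ x ^ n * (c * x - s) = d := by
  set M := max 1 ((s + d) / c)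
  have hM : d ≤ M ^ n * (c * M - s) := by
    have hcM : s + d ≤ c * M := (div_le_iff₀' hc).1 (le_max_right _ _)
    have hMn : 1 ≤ M ^ n := one_le_pow₀ (le_max_left _ _)
    nlinarith
  have hzero : (0 : ℝ) ^ n * (c * 0 - s) ≤ 0 :=
    mul_nonpos_of_nonneg_of_nonpos (pow_nonneg le_rfl n) (by linarith)
  obtain ⟨x, hxM, hx⟩ := intermediate_value_Icc (zero_le_one.trans (le_max_left 1 _))
    (by fun_prop : Continuous fun x : ℝ => x ^ n * (c * x - s)).continuousOn
    ⟨hzero.trans hd.le, hM⟩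
  refine ⟨x, hxM.1.lt_of_ne ?_, hx⟩
  rintro rfl
  exact hd.not_ge (hx ▸ hzero)

/-- Let `q ≥ 1` be an integer and `c > 0`, `d > 0`, `s ≥ 0` reals. Then there is exactly
one `λ > 0` with `c·λ^q − s·λ^{q−1} − d = 0`; moreover the polynomial is strictly increasing
on the (positive) set where it is nonnegative. -/
theorem stmt_5 (q : ℕ) (hq : 1 ≤ q) (c d s : ℝ) (hc : 0 < c) (hd : 0 < d) (hs : 0 ≤ s) :
    (∃! lam : ℝ, 0 < lam ∧ c * lam ^ q - s * lam ^ (q - 1) - d = 0) ∧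
      StrictMonoOn (fun lam : ℝ => c * lam ^ q - s * lam ^ (q - 1) - d)
        {lam : ℝ | 0 < lam ∧ 0 ≤ c * lam ^ q - s * lam ^ (q - 1) - d} := by
  obtain ⟨n, rfl⟩ := Nat.exists_eq_add_of_le' hq
  have factor : ∀ x : ℝ, c * x ^ (n + 1) - s * x ^ (n + 1 - 1) - d = x ^ n * (c * x - s) - d :=
    fun x => by rw [Nat.add_sub_cancel, pow_succ]; ring
  simp only [factor, sub_nonneg, sub_eq_zero]
  have hmono : StrictMonoOn (fun x : ℝ => x ^ n * (c * x - s) - d)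
      {x | 0 < x ∧ d ≤ x ^ n * (c * x - s)} := by
    have hsub : {x | 0 < x ∧ d ≤ x ^ n * (c * x - s)} ⊆ {x | 0 ≤ x ∧ s < c * x} :=
      fun x hx => ⟨hx.1.le, lt_mul_of_pos_le_pow_mul_sub hd hx.1.le hx.2⟩
    exact fun x hx y hy hxy =>
      sub_lt_sub_right ((strictMonoOn_pow_mul_sub n hc s).mono hsub hx hy hxy) d
  obtain ⟨x, hx, hfx⟩ := exists_pos_pow_mul_sub_eq n hc hd hs
  exact ⟨⟨x, ⟨hx, hfx⟩, fun y hy => hmono.injOn ⟨hy.1, hy.2.ge⟩ ⟨hx, hfx.ge⟩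
    (congrArg (· - d) (hy.2.trans hfx.symm))⟩, hmono⟩
end

section
/- Let q ≥ 1 be an integer, c > 0, d > 0, s ≥ 0, and let λ > 0 be the unique positive solution of c·λ^q − s·λ^{q−1} − d = 0. Then λ ≤ s/c + (d/c)^{1/q}. In particular, the regularized eigenvalue produced by the power inverse Wishart MAP never exceeds the linear regularization with the same floor and the same shrinkage factor. -/
/-! With `t = (d/c)^{1/q}` the equation reads `λ^{q-1} (cλ - s) = c t^q`. If `λ > s/c + t`, then
`λ > t` and `cλ - s > ct`, so the left side strictly exceeds `t^{q-1} · ct = c t^q`. -/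

theorem le_div_add_of_pow_mul_sub_eq {K : Type*} [Field K] [LinearOrder K] [IsStrictOrderedRing K]
    {n : ℕ} {c s t x : K} (hc : 0 < c) (hs : 0 ≤ s) (ht : 0 ≤ t) (hx : 0 < x)
    (h : x ^ n * (c * x - s) = c * t ^ (n + 1)) : x ≤ s / c + t := by
  by_contra! hlt
  have hct : c * t < c * x - s := by
    have := mul_lt_mul_of_pos_left hlt hc
    rw [mul_add, mul_div_cancel₀ _ hc.ne'] at this
    linarith
  have htx : t ≤ x := by linarith [div_nonneg hs hc.le]
  refine (calc c * t ^ (n + 1) = t ^ n * (c * t) := by ring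
    _ ≤ x ^ n * (c * t) := by gcongr
    _ < x ^ n * (c * x - s) := mul_lt_mul_of_pos_left hct (pow_pos hx n)).ne' h

/-- Let `q ≥ 1`, `c > 0`, `d > 0`, `s ≥ 0`, and let `λ > 0` solve
`c·λ^q − s·λ^{q−1} − d = 0`. Then `λ ≤ s/c + (d/c)^{1/q}`: the regularized eigenvalue
never exceeds the linear regularization with the same floor and shrinkage factor. -/
theorem stmt_7 (q : ℕ) (hq : 1 ≤ q) (c d s lam : ℝ) (hc : 0 < c) (hd : 0 < d) (hs : 0 ≤ s)
    (hlam : 0 < lam) (heq : c * lam ^ q - s * lam ^ (q - 1) - d = 0) :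
    lam ≤ s / c + (d / c) ^ ((1 : ℝ) / (q : ℝ)) := by
  obtain ⟨n, rfl⟩ : ∃ n, q = n + 1 := ⟨q - 1, by omega⟩
  refine le_div_add_of_pow_mul_sub_eq (n := n) hc hs (by positivity) hlam ?_
  rw [one_div, Real.rpow_inv_natCast_pow (div_nonneg hd.le hc.le) n.succ_ne_zero,
    mul_div_cancel₀ _ hc.ne']
  rw [Nat.add_sub_cancel] at heq
  linear_combination heq
end

section
/- Let q ≥ 2 be an integer, c > 0, d > 0, and for s ≥ 0 let g(s) denote the unique positive solution of c·λ^q − s·λ^{q−1} − d = 0. Then g is strictly increasing and strictly convex on [0, ∞). -/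
/-!
Dividing the defining equation by `λ ^ (q - 1)` shows that `g` is a right inverse on `[0, ∞)`
of `h λ = c λ - d / λ ^ (q - 1)` on `(0, ∞)`. This `h` is increasing and, as `q ≥ 2`, strictly
concave, and a right inverse of an increasing strictly concave function is strictly increasing
and strictly convex.
-/

open Set

theorem StrictConvexOn.const_mul {E : Type*} [AddCommMonoid E] [Module ℝ E] {s : Set E}
    {f : E → ℝ} {d : ℝ} (hd : 0 < d) (hf : StrictConvexOn ℝ s f) :
    StrictConvexOn ℝ s fun x => d * f x := by
  refine ⟨hf.1, fun x hx y hy hxy a b ha hb hab => ?_⟩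
  have h := mul_lt_mul_of_pos_left (hf.2 hx hy hxy ha hb hab) hd
  simp only [smul_eq_mul] at h ⊢
  linarith

theorem MonotoneOn.strictMonoOn_of_leftInvOn {α β : Type*} [Preorder α] [LinearOrder β]
    {f : β → α} {g : α → β} {s : Set α} {t : Set β} (hf : MonotoneOn f t) (hg : MapsTo g s t)
    (hfg : LeftInvOn f g s) : StrictMonoOn g s := by
  intro x hx y hy hxy
  by_contra! hle
  have := hf (hg hy) (hg hx) hle
  rw [hfg hx, hfg hy] at this
  exact hxy.not_ge this

-- `f` lies strictly above its chords, so its right inverse `g` lies strictly below them.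
theorem StrictConcaveOn.strictConvexOn_of_leftInvOn {𝕜 : Type*} [Field 𝕜] [LinearOrder 𝕜]
    {f g : 𝕜 → 𝕜} {s t : Set 𝕜} (hf : StrictConcaveOn 𝕜 t f) (hf' : MonotoneOn f t)
    (hs : Convex 𝕜 s) (hg : MapsTo g s t) (hfg : LeftInvOn f g s) : StrictConvexOn 𝕜 s g := by
  refine ⟨hs, fun x hx y hy hxy a b ha hb hab => ?_⟩
  have hne : g x ≠ g y := fun h => hxy (by rw [← hfg hx, ← hfg hy, h])
  have hxy_mem : a • x + b • y ∈ s := hs hx hy ha.le hb.le hab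
  have hmix : a • g x + b • g y ∈ t := hf.1 (hg hx) (hg hy) ha.le hb.le hab
  have hchord := hf.2 (hg hx) (hg hy) hne ha hb hab
  rw [hfg hx, hfg hy, ← hfg hxy_mem] at hchord
  by_contra! hle
  exact (hchord.trans_le (hf' hmix (hg hxy_mem) hle)).false

theorem strictConcaveOn_mul_sub_div_pow (c : ℝ) {d : ℝ} (hd : 0 < d) {n : ℕ} (hn : n ≠ 0) :
    StrictConcaveOn ℝ (Ioi 0) (fun x : ℝ => c * x - d / x ^ n) := by
  have hpow : StrictConvexOn ℝ (Ioi 0) (fun x : ℝ => d * x ^ (-n : ℤ)) :=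
    (strictConvexOn_zpow (by simpa using hn) (by omega)).const_mul hd
  have hlin : ConcaveOn ℝ (Ioi 0) (fun x : ℝ => c * x) :=
    (LinearMap.mulLeft ℝ c).concaveOn (convex_Ioi 0)
  refine (hlin.sub_strictConvexOn hpow).congr fun x _ => ?_
  simp [zpow_neg, div_eq_mul_inv]

theorem monotoneOn_mul_sub_div_pow {c d : ℝ} (hc : 0 ≤ c) (hd : 0 ≤ d) (n : ℕ) :
    MonotoneOn (fun x : ℝ => c * x - d / x ^ n) (Ioi 0) := by
  intro x hx y _ hxy
  have hpow : d / y ^ n ≤ d / x ^ n :=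
    div_le_div_of_nonneg_left hd (pow_pos hx n) (pow_le_pow_left₀ (le_of_lt hx) hxy n)
  have := mul_le_mul_of_nonneg_left hxy hc
  dsimp only
  linarith

theorem mul_sub_div_pow_eq_of_root {c d s x : ℝ} {n : ℕ} (hx : 0 < x)
    (hroot : c * x ^ (n + 1) - s * x ^ n - d = 0) : c * x - d / x ^ n = s := by
  have : x ^ n ≠ 0 := pow_ne_zero n hx.ne'
  field_simp
  linear_combination hroot

/-- Let `q ≥ 2`, `c > 0`, `d > 0`, and for `s ≥ 0` let `g s` be the unique positive
solution of `c·λ^q − s·λ^{q−1} − d = 0`.  Then `g` is strictly increasing and strictly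
convex on `[0, ∞)`. -/
theorem stmt_8 (q : ℕ) (hq : 2 ≤ q) (c d : ℝ) (hc : 0 < c) (hd : 0 < d) (g : ℝ → ℝ)
    (hg : ∀ s, 0 ≤ s → 0 < g s ∧ c * g s ^ q - s * g s ^ (q - 1) - d = 0) :
    StrictMonoOn g (Set.Ici 0) ∧ StrictConvexOn ℝ (Set.Ici 0) g := by
  obtain ⟨n, rfl⟩ : ∃ n, q = n + 1 := ⟨q - 1, by omega⟩
  have hmaps : MapsTo g (Ici 0) (Ioi 0) := fun s hs => (hg s hs).1
  have hinv : LeftInvOn (fun x => c * x - d / x ^ n) g (Ici 0) := fun s hs =>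
    mul_sub_div_pow_eq_of_root (hg s hs).1 (by simpa using (hg s hs).2)
  have hmono := monotoneOn_mul_sub_div_pow hc.le hd.le n
  exact ⟨hmono.strictMonoOn_of_leftInvOn hmaps hinv,
    (strictConcaveOn_mul_sub_div_pow c hd (by omega)).strictConvexOn_of_leftInvOn hmono
      (convex_Ici 0) hmaps hinv⟩
end

section
/- Let q ≥ 1 be an integer, c > 0, d > 0, and for s ≥ 0 let g(s) denote the unique positive solution of c·λ^q − s·λ^{q−1} − d = 0. Then g is differentiable at every s ≥ 0 with derivative g'(s) = g(s)/(q·c·g(s) − (q−1)·s), and this derivative is strictly positive. -/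
/-!
For `λ > 0` the equation `c λ^q − s λ^(q−1) − d = 0` says exactly `s = h λ` with
`h λ = c λ − d / λ^(q−1)` (`regularizationInv c d (q − 1)`), so `g` is a left inverse of `h`
on `[0, ∞)`. Since `h λ − c λ` is nondecreasing, `h` expands distances by a factor `c`, hence
`g` is `1/c`-Lipschitz and in particular continuous. The inverse function rule then gives
`g' s = 1 / h' (g s)`, and substituting `d / λ^(q−1) = c λ − s` into `h'` yields
`h' λ = (q c λ − (q−1) s) / λ > 0`.
-/

open Set

theorem HasDerivWithinAt.of_leftInvOn {𝕜 : Type*} [NontriviallyNormedField 𝕜] {f g : 𝕜 → 𝕜}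
    {f' a : 𝕜} {s : Set 𝕜} (hg : ContinuousWithinAt g s a) (hf : HasDerivAt f f' (g a))
    (hf' : f' ≠ 0) (ha : a ∈ s) (hfg : LeftInvOn f g s) : HasDerivWithinAt g f'⁻¹ s a :=
  (hf.hasFDerivAt_equiv hf').hasFDerivWithinAt.of_local_left_inverse
    (by rwa [nhdsWithin_univ]) ha (eventually_nhdsWithin_of_forall hfg)

theorem LipschitzOnWith.of_leftInvOn {α β : Type*} [PseudoMetricSpace α] [PseudoMetricSpace β]
    {f : β → α} {g : α → β} {s : Set α} {t : Set β} {c : ℝ} (hc : 0 < c)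
    (hf : ∀ x ∈ t, ∀ y ∈ t, c * dist x y ≤ dist (f x) (f y)) (hg : MapsTo g s t)
    (hfg : LeftInvOn f g s) : LipschitzOnWith (Real.toNNReal c⁻¹) g s := by
  refine LipschitzOnWith.of_dist_le_mul fun a ha b hb => ?_
  have := hf _ (hg ha) _ (hg hb)
  rw [hfg ha, hfg hb] at this
  rwa [Real.coe_toNNReal _ (inv_nonneg.mpr hc.le), inv_mul_eq_div, le_div_iff₀' hc]

noncomputable def regularizationInv (c d : ℝ) (r : ℕ) (x : ℝ) : ℝ := c * x - d / x ^ r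

section

variable {c d : ℝ} {r : ℕ} {x y s : ℝ}

theorem regularizationInv_eq_of_root (hx : 0 < x)
    (h : c * x ^ (r + 1) - s * x ^ r - d = 0) : regularizationInv c d r x = s := by
  have : x ^ r ≠ 0 := by positivity
  rw [regularizationInv]
  field_simp
  linear_combination h

theorem mul_dist_le_dist_regularizationInv (hc : 0 < c) (hd : 0 ≤ d) (hx : 0 < x) (hy : 0 < y) :
    c * dist x y ≤ dist (regularizationInv c d r x) (regularizationInv c d r y) := by
  wlog hxy : x ≤ y generalizing x y
  · rw [dist_comm, dist_comm (regularizationInv c d r x)]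
    exact this hy hx (le_of_not_ge hxy)
  have hexpand : c * (y - x) ≤ regularizationInv c d r y - regularizationInv c d r x := by
    have : d / y ^ r ≤ d / x ^ r := by gcongr
    unfold regularizationInv
    linarith
  have : 0 ≤ c * (y - x) := mul_nonneg hc.le (sub_nonneg.2 hxy)
  rw [dist_comm x, dist_comm (regularizationInv c d r x), Real.dist_eq, Real.dist_eq,
    abs_of_nonneg (sub_nonneg.2 hxy), abs_of_nonneg (by linarith)]
  exact hexpand

theorem hasDerivAt_regularizationInv (hx : 0 < x) :
    HasDerivAt (regularizationInv c d r)
      (((r + 1) * c * x - r * regularizationInv c d r x) / x) x := by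
  have hxr : x ^ r ≠ 0 := by positivity
  have h := ((hasDerivAt_id x).const_mul c).sub ((hasDerivAt_const x d).div (hasDerivAt_pow r x) hxr)
  have hpow_pred : (r : ℝ) * x ^ (r - 1) = r * x ^ r / x := by
    rcases r.eq_zero_or_pos with rfl | hr
    · simp
    · rw [eq_div_iff hx.ne', mul_assoc, pow_sub_one_mul hr.ne']
  refine h.congr_deriv ?_
  rw [hpow_pred, regularizationInv]
  field_simp
  ring

end

/-- Let `q ≥ 1`, `c > 0`, `d > 0`, and for `s ≥ 0` let `g s` be the unique positive
solution of `c·λ^q − s·λ^{q−1} − d = 0`.  Then `g` is differentiable at every `s ≥ 0`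
(within `[0,∞)`) with strictly positive derivative `g(s)/(q·c·g(s) − (q−1)·s)`. -/
theorem stmt_9 (q : ℕ) (hq : 1 ≤ q) (c d : ℝ) (hc : 0 < c) (hd : 0 < d) (g : ℝ → ℝ)
    (hg : ∀ s, 0 ≤ s → 0 < g s ∧ c * g s ^ q - s * g s ^ (q - 1) - d = 0) :
    ∀ s, 0 ≤ s →
      HasDerivWithinAt g (g s / ((q : ℝ) * c * g s - ((q : ℝ) - 1) * s)) (Set.Ici 0) s ∧
        0 < g s / ((q : ℝ) * c * g s - ((q : ℝ) - 1) * s) := by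
  obtain ⟨r, rfl⟩ : ∃ r, q = r + 1 := ⟨q - 1, by omega⟩
  simp only [Nat.add_sub_cancel] at hg
  have hleft : LeftInvOn (regularizationInv c d r) g (Ici 0) := fun s hs ↦
    regularizationInv_eq_of_root (hg s hs).1 (hg s hs).2
  have hcont : ContinuousOn g (Ici 0) :=
    (LipschitzOnWith.of_leftInvOn hc
      (fun _ hx _ hy ↦ mul_dist_le_dist_regularizationInv hc hd.le hx hy)
      (fun s hs ↦ (hg s hs).1) hleft).continuousOn
  intro s hs
  have hx := (hg s hs).1
  have hderiv_pos : 0 < (r + 1) * c * g s - r * s := by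
    have hroot : c * g s - d / g s ^ r = s := hleft hs
    have : 0 ≤ r * (d / g s ^ r) := by positivity
    nlinarith [mul_pos hc hx]
  have hderiv := hasDerivAt_regularizationInv (c := c) (d := d) (r := r) hx
  rw [hleft hs] at hderiv
  have hinv := HasDerivWithinAt.of_leftInvOn (hcont s hs) hderiv (by positivity) hs hleft
  rw [inv_div] at hinv
  push_cast
  simp only [add_sub_cancel_right]
  exact ⟨hinv, div_pos hx hderiv_pos⟩
end

section
/- Let A be a real symmetric positive semidefinite p×p matrix, let n, q be positive integers and c > 0 a real number. Then there exists exactly one real symmetric positive definite p×p matrix Υ satisfying n·A·Υ + q·Υ^q = c·I. Moreover this Υ commutes with A, and can be written as Υ = V·Δ·Vᵀ where V is any orthogonal matrix diagonalizing A with eigenvalues δ_1,…,δ_p, and Δ is diagonal with Δ_{ii} the unique positive solution of q·λ^q + n·δ_i·λ − c = 0. -/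
/-!
Conjugating by `V` reduces the equation to the case `A = diagonal δ`. There, let `U` diagonalize
a positive definite solution `W`, so `W * U = U * diagonal μ`. Multiplying the equation on the
right by `U` shows `U i j * (b μⱼ ^ k + a δᵢ μⱼ - c) = 0`. As `x ↦ b x ^ k + a δᵢ x` is strictly
increasing on `[0, ∞)`, each nonzero `U i j` forces `μⱼ = Δᵢ`, that is
`diagonal Δ * U = U * diagonal μ = W * U`, hence `W = diagonal Δ`. Conversely `V * diagonal Δ * Vᵀ`
is a solution, and it commutes with `A = V * diagonal δ * Vᵀ`.
-/

open Matrix Unitary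

section Scalar

variable {a b : ℝ} {k : ℕ}

lemma strictMonoOn_mul_pow_add_mul (ha : 0 < a) (hb : 0 ≤ b) (hk : k ≠ 0) :
    StrictMonoOn (fun x : ℝ => a * x ^ k + b * x) (Set.Ici 0) := fun _ hx _ _ hxy =>
  add_lt_add_of_lt_of_le (mul_lt_mul_of_pos_left (pow_lt_pow_left₀ hxy hx hk) ha)
    (mul_le_mul_of_nonneg_left hxy.le hb)

lemma exists_pos_mul_pow_add_mul_eq (ha : 0 < a) (hb : 0 ≤ b) (hk : k ≠ 0) {c : ℝ}
    (hc : 0 < c) : ∃ x, 0 < x ∧ a * x ^ k + b * x = c := by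
  set M := c / a + 1
  have hM : 1 ≤ M := by simp only [M]; linarith [div_pos hc ha]
  have hcM : c < a * M ^ k + b * M := by
    have hpow : a * M ≤ a * M ^ k := mul_le_mul_of_nonneg_left (le_self_pow₀ hM hk) ha.le
    have haM : a * M = c + a := by simp only [M, mul_add, mul_div_cancel₀ _ ha.ne', mul_one]
    nlinarith [mul_nonneg hb (zero_le_one.trans hM)]
  obtain ⟨x, ⟨hx, -⟩, hfx⟩ := intermediate_value_Ioo (zero_le_one.trans hM)
    (f := fun x : ℝ => a * x ^ k + b * x) (by fun_prop) ⟨by simpa [hk] using hc, hcM⟩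
  exact ⟨x, hx, hfx⟩

end Scalar

namespace Matrix

open scoped ComplexOrder

variable {ι 𝕜 : Type*} [Fintype ι] [DecidableEq ι] [RCLike 𝕜]

lemma posDef_conjStarAlgAut_iff (u : unitaryGroup ι 𝕜) {X : Matrix ι ι 𝕜} :
    (conjStarAlgAut 𝕜 _ u X).PosDef ↔ X.PosDef :=
  IsUnit.posDef_star_right_conjugate_iff isUnit_coe

lemma posSemidef_conjStarAlgAut_iff (u : unitaryGroup ι 𝕜) {X : Matrix ι ι 𝕜} :
    (conjStarAlgAut 𝕜 _ u X).PosSemidef ↔ X.PosSemidef :=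
  IsUnit.posSemidef_star_right_conjugate_iff isUnit_coe

lemma mem_unitaryGroup_iff_mul_transpose_eq_one {V : Matrix ι ι ℝ} :
    V ∈ unitaryGroup ι ℝ ↔ V * Vᵀ = 1 := by
  simp [mem_unitaryGroup_iff, star_eq_conjTranspose]

lemma conjStarAlgAut_apply_eq_mul_mul_transpose (u : unitaryGroup ι ℝ) (X : Matrix ι ι ℝ) :
    conjStarAlgAut ℝ _ u X = u * X * (u : Matrix ι ι ℝ)ᵀ := by
  simp [star_eq_conjTranspose]

lemma IsHermitian.eq_conjStarAlgAut_diagonal {A : Matrix ι ι ℝ} (hA : A.IsHermitian) :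
    A = conjStarAlgAut ℝ _ hA.eigenvectorUnitary (diagonal hA.eigenvalues) := by
  simpa [RCLike.ofReal_real_eq_id] using hA.spectral_theorem

lemma IsHermitian.mul_eigenvectorUnitary {A : Matrix ι ι ℝ} (hA : A.IsHermitian) :
    A * hA.eigenvectorUnitary = hA.eigenvectorUnitary * diagonal hA.eigenvalues := by
  have h := congrArg (· * (hA.eigenvectorUnitary : Matrix ι ι ℝ)) hA.eq_conjStarAlgAut_diagonal
  simpa [mul_assoc] using h

lemma diagonal_mul_eq_mul_diagonal_of_ne_zero {R m n : Type*} [CommSemiring R] [Fintype m]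
    [Fintype n] [DecidableEq m] [DecidableEq n] {a : m → R} {b : n → R} {M : Matrix m n R}
    (h : ∀ i j, M i j ≠ 0 → a i = b j) : diagonal a * M = M * diagonal b := by
  ext i j
  rw [diagonal_mul, mul_diagonal]
  by_cases hM : M i j = 0
  · simp [hM]
  · rw [h i j hM, mul_comm]

variable {a b c : ℝ} {k : ℕ}

lemma smul_diagonal_mul_add_smul_diagonal_pow {δ Δ : ι → ℝ}
    (hΔ : ∀ i, b * Δ i ^ k + a * δ i * Δ i = c) :
    a • (diagonal δ * diagonal Δ) + b • diagonal Δ ^ k = c • 1 := by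
  ext i j
  rcases eq_or_ne i j with rfl | hij
  · simp [← hΔ i, diagonal_pow]; ring
  · simp [hij, diagonal_pow]

theorem eq_diagonal_of_posDef_of_smul_diagonal_mul_add_smul_pow_eq (ha : 0 < a) (hb : 0 < b)
    (hk : k ≠ 0) {δ Δ : ι → ℝ} (hδ : 0 ≤ δ)
    (hΔ : ∀ i, 0 < Δ i ∧ b * Δ i ^ k + a * δ i * Δ i = c) {W : Matrix ι ι ℝ} (hW : W.PosDef)
    (heq : a • (diagonal δ * W) + b • W ^ k = c • 1) : W = diagonal Δ := by
  set U : Matrix ι ι ℝ := ↑hW.isHermitian.eigenvectorUnitary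
  set μ := hW.isHermitian.eigenvalues
  have hWU : W * U = U * diagonal μ := hW.isHermitian.mul_eigenvectorUnitary
  have hWkU : W ^ k * U = U * diagonal μ ^ k :=
    Eq.symm <| (show SemiconjBy U (diagonal μ) W from hWU.symm).pow_right k
  have hU : a • (diagonal δ * (U * diagonal μ)) + b • (U * diagonal μ ^ k) = c • U := by
    simpa [add_mul, mul_assoc, hWU, hWkU] using congrArg (· * U) heq
  have hroot : ∀ i j, U i j ≠ 0 → Δ i = μ j := by
    intro i j hij
    have hUij := congrFun (congrFun hU i) j
    simp only [add_apply, smul_apply, diagonal_mul, mul_diagonal, diagonal_pow, Pi.pow_apply,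
      smul_eq_mul] at hUij
    have hμ : b * μ j ^ k + a * δ i * μ j = c :=
      mul_left_cancel₀ hij (by linear_combination hUij)
    exact (strictMonoOn_mul_pow_add_mul hb (mul_nonneg ha.le (hδ i)) hk).injOn
      (hΔ i).1.le (hW.eigenvalues_pos j).le ((hΔ i).2.trans hμ.symm)
  have hΔU : diagonal Δ * U = W * U := by
    rw [hWU]
    exact diagonal_mul_eq_mul_diagonal_of_ne_zero hroot
  exact (isUnit_coe.mul_left_inj.mp hΔU).symm

theorem eq_mul_diagonal_mul_transpose_of_posDef (ha : 0 < a) (hb : 0 < b) (hk : k ≠ 0)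
    {A V : Matrix ι ι ℝ} {δ Δ : ι → ℝ} (hA : A.PosSemidef) (hV : V * Vᵀ = 1)
    (hAV : A = V * diagonal δ * Vᵀ) (hΔ : ∀ i, 0 < Δ i ∧ b * Δ i ^ k + a * δ i * Δ i = c)
    {Υ : Matrix ι ι ℝ} (hΥ : Υ.PosDef) (heq : a • (A * Υ) + b • Υ ^ k = c • 1) :
    Υ = V * diagonal Δ * Vᵀ := by
  let u : unitaryGroup ι ℝ := ⟨V, mem_unitaryGroup_iff_mul_transpose_eq_one.mpr hV⟩
  set φ := conjStarAlgAut ℝ (Matrix ι ι ℝ) u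
  have hφ : ∀ X, φ X = V * X * Vᵀ := conjStarAlgAut_apply_eq_mul_mul_transpose u
  rw [← hφ] at hAV ⊢
  have hδ : 0 ≤ δ := posSemidef_diagonal_iff.mp ((posSemidef_conjStarAlgAut_iff u).mp (hAV ▸ hA))
  have hW : (φ.symm Υ).PosDef := by rwa [← posDef_conjStarAlgAut_iff u, φ.apply_symm_apply]
  have heqW : a • (diagonal δ * φ.symm Υ) + b • φ.symm Υ ^ k = c • 1 := by
    simpa [hAV] using congrArg φ.symm heq
  rw [← φ.apply_symm_apply Υ,
    eq_diagonal_of_posDef_of_smul_diagonal_mul_add_smul_pow_eq ha hb hk hδ hΔ hW heqW]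

end Matrix

/-- Let `A` be real symmetric positive semidefinite, `n, q` positive integers, `c > 0`.
Then there is exactly one symmetric positive definite `Υ` with `n·A·Υ + q·Υ^q = c·I`;
it commutes with `A` and equals `V·Δ·Vᵀ` for any orthogonal `V` diagonalizing `A` with
eigenvalues `δ_i`, where `Δ` is diagonal with `Δ_{ii}` the unique positive solution of
`q·λ^q + n·δ_i·λ − c = 0`. -/
theorem stmt_12 (p n q : ℕ) (hn : 0 < n) (hq : 0 < q) (c : ℝ) (hc : 0 < c)
    (A : Matrix (Fin p) (Fin p) ℝ) (hA : A.PosSemidef) :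
    (∃! Υ : Matrix (Fin p) (Fin p) ℝ,
        Υ.PosDef ∧
          (n : ℝ) • (A * Υ) + (q : ℝ) • Υ ^ q = c • (1 : Matrix (Fin p) (Fin p) ℝ)) ∧
      ∀ Υ : Matrix (Fin p) (Fin p) ℝ, Υ.PosDef →
        (n : ℝ) • (A * Υ) + (q : ℝ) • Υ ^ q = c • (1 : Matrix (Fin p) (Fin p) ℝ) →
          A * Υ = Υ * A ∧
            ∀ (V : Matrix (Fin p) (Fin p) ℝ) (δ Δ : Fin p → ℝ),
              V * Vᵀ = 1 → A = V * Matrix.diagonal δ * Vᵀ →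
                (∀ i, 0 < Δ i ∧ (q : ℝ) * Δ i ^ q + (n : ℝ) * δ i * Δ i - c = 0) →
                  Υ = V * Matrix.diagonal Δ * Vᵀ := by
  have hn' : (0 : ℝ) < n := Nat.cast_pos.mpr hn
  have hq' : (0 : ℝ) < q := Nat.cast_pos.mpr hq
  set u := hA.isHermitian.eigenvectorUnitary
  set φ := conjStarAlgAut ℝ (Matrix (Fin p) (Fin p) ℝ) u
  have hφ : ∀ X, φ X = u * X * (u : Matrix (Fin p) (Fin p) ℝ)ᵀ :=
    conjStarAlgAut_apply_eq_mul_mul_transpose u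
  have hA₀ : A = φ (diagonal hA.isHermitian.eigenvalues) :=
    hA.isHermitian.eq_conjStarAlgAut_diagonal
  choose Δ₀ hΔ₀ using fun i =>
    exists_pos_mul_pow_add_mul_eq hq' (mul_nonneg hn'.le (hA.eigenvalues_nonneg i)) hq.ne' hc
  have unique : ∀ Υ, Υ.PosDef → (n : ℝ) • (A * Υ) + (q : ℝ) • Υ ^ q = c • 1 →
      Υ = φ (diagonal Δ₀) := fun Υ hΥ heq => by
    rw [hφ]
    exact eq_mul_diagonal_mul_transpose_of_posDef hn' hq' hq.ne' hA
      (mem_unitaryGroup_iff_mul_transpose_eq_one.mp u.2) (hφ _ ▸ hA₀) hΔ₀ hΥ heq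
  refine ⟨⟨φ (diagonal Δ₀), ⟨?_, ?_⟩, fun Υ hΥ => unique Υ hΥ.1 hΥ.2⟩,
    fun Υ hΥ heq => ⟨?_, fun V δ Δ hV hAV hΔ => ?_⟩⟩
  · exact (posDef_conjStarAlgAut_iff u).mpr (posDef_diagonal_iff.mpr fun i => (hΔ₀ i).1)
  · rw [hA₀, ← map_mul, ← map_pow, ← map_smul, ← map_smul, ← map_add,
      smul_diagonal_mul_add_smul_diagonal_pow fun i => (hΔ₀ i).2, map_smul, map_one]
  · rw [unique Υ hΥ heq, hA₀]
    exact ((commute_diagonal _ _).map φ).eq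
  · exact eq_mul_diagonal_mul_transpose_of_posDef hn' hq' hq.ne' hA hV hAV
      (fun i => (hΔ i).imp_right sub_eq_zero.mp) hΥ heq
end

section
/- Let A be a real symmetric positive semidefinite p×p matrix, q ≥ 1 an integer, and c > 0. Then the function l(Υ) = −(1/2)·tr(A·Υ + Υ^q) + c·log det Υ, defined on the set of real symmetric positive definite p×p matrices, attains a unique global maximum, and the maximizer is the unique symmetric positive definite solution of A·Υ + q·Υ^q = 2c·I. -/
/-!
Put `φ x = x ^ q / 2 - c log x`, strictly convex on `(0, ∞)`. If `Y ≻ 0` solves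
`A Y + q Y ^ q = 2c I`, then `A = -2 φ'(Y)`, so `l B = tr (φ'(Y) B) - tr φ(B)` and
`l Y - l B = tr φ(B) - tr φ(Y) - tr (φ'(Y) (B - Y))`. This is positive for `B ≠ Y` by Klein's
inequality: in eigenbases `(uᵢ)` of `Y` and `(vⱼ)` of `B` it equals
`∑ᵢⱼ ⟪uᵢ, vⱼ⟫² (φ βⱼ - φ αᵢ - φ' αᵢ (βⱼ - αᵢ))`, with every summand nonnegative and one positive
unless the two spectral decompositions agree. So every positive definite solution is the strict
global maximizer, hence there is at most one; a solution is obtained by functional calculus,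
solving `a x + q x ^ q = 2c` for `x > 0` at each eigenvalue `a ≥ 0` of `A`.
-/

open Matrix

lemma pow_add_mul_sub_le_pow {x y : ℝ} (hx : 0 < x) (hy : 0 ≤ y) (q : ℕ) :
    x ^ q + q * x ^ (q - 1) * (y - x) ≤ y ^ q := by
  have hbern := one_add_mul_le_pow (a := y / x - 1) (by linarith [div_nonneg hy hx.le]) q
  rw [add_sub_cancel] at hbern
  rcases q with _ | k
  · simp
  calc x ^ (k + 1) + ((k + 1 : ℕ) : ℝ) * x ^ (k + 1 - 1) * (y - x)
      = x ^ (k + 1) * (1 + ((k + 1 : ℕ) : ℝ) * (y / x - 1)) := by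
        field_simp
        simp only [Nat.add_sub_cancel, pow_succ]
        ring
    _ ≤ x ^ (k + 1) * (y / x) ^ (k + 1) := by gcongr
    _ = y ^ (k + 1) := by rw [div_pow, mul_div_cancel₀ _ (pow_ne_zero _ hx.ne')]

lemma Real.log_lt_log_add_inv_mul_sub {x y : ℝ} (hx : 0 < x) (hy : 0 < y) (hxy : x ≠ y) :
    Real.log y < Real.log x + x⁻¹ * (y - x) := by
  have h := Real.log_lt_sub_one_of_pos (div_pos hy hx)
    (by rwa [ne_eq, div_eq_one_iff_eq hx.ne', eq_comm])
  rw [Real.log_div hy.ne' hx.ne'] at h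
  have : y / x - 1 = x⁻¹ * (y - x) := by field_simp
  linarith

namespace Matrix.IsHermitian

variable {n : Type*} [Fintype n] [DecidableEq n] {X Y : Matrix n n ℝ}

lemma cfc_eq_mul_diagonal_mul (hX : X.IsHermitian) (f : ℝ → ℝ) :
    cfc f X = (hX.eigenvectorUnitary : Matrix n n ℝ) * diagonal (f ∘ hX.eigenvalues) *
      star (hX.eigenvectorUnitary : Matrix n n ℝ) := by
  rw [hX.cfc_eq, IsHermitian.cfc, Unitary.conjStarAlgAut_apply]
  rfl

lemma trace_cfc (hX : X.IsHermitian) (f : ℝ → ℝ) :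
    (cfc f X).trace = ∑ i, f (hX.eigenvalues i) := by
  rw [cfc_eq_mul_diagonal_mul hX, trace_mul_cycle,
    Unitary.star_mul_self_of_mem hX.eigenvectorUnitary.2, Matrix.one_mul, trace_diagonal]
  rfl

noncomputable def eigenOverlap (hX : X.IsHermitian) (hY : Y.IsHermitian) : unitaryGroup n ℝ :=
  star hX.eigenvectorUnitary * hY.eigenvectorUnitary

lemma trace_cfc_mul_cfc (hX : X.IsHermitian) (hY : Y.IsHermitian) (f g : ℝ → ℝ) :
    (cfc f X * cfc g Y).trace = ∑ i, ∑ j, f (hX.eigenvalues i) * g (hY.eigenvalues j) *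
      (hX.eigenOverlap hY : Matrix n n ℝ) i j ^ 2 := by
  set U : Matrix n n ℝ := ↑hX.eigenvectorUnitary
  set V : Matrix n n ℝ := ↑hY.eigenvectorUnitary
  set W : Matrix n n ℝ := ↑(hX.eigenOverlap hY)
  have hW : W = star U * V := rfl
  have hW' : star W = star V * U := by rw [hW, star_mul, star_star]
  set Df := diagonal (f ∘ hX.eigenvalues)
  set Dg := diagonal (g ∘ hY.eigenvalues)
  calc (cfc f X * cfc g Y).trace = (U * Df * star U * (V * Dg * star V)).trace := by
        rw [cfc_eq_mul_diagonal_mul hX, cfc_eq_mul_diagonal_mul hY]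
    _ = (Df * W * Dg * star W).trace := by
        rw [Matrix.mul_assoc U, Matrix.mul_assoc U, trace_mul_comm, hW', hW]
        simp only [Matrix.mul_assoc]
    _ = _ := by
        simp only [trace, diag_apply, mul_apply (M := _ * diagonal _), mul_diagonal,
          diagonal_mul, star_apply, star_trivial, Function.comp_apply, Df, Dg]
        exact Finset.sum_congr rfl fun i _ ↦ Finset.sum_congr rfl fun j _ ↦ by ring

lemma trace_cfc_sub_sub_trace_cfc_mul_sub (hX : X.IsHermitian) (hY : Y.IsHermitian)
    (f g : ℝ → ℝ) :
    (cfc f Y).trace - (cfc f X).trace - (cfc g X * (Y - X)).trace =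
      ∑ i, ∑ j, (hX.eigenOverlap hY : Matrix n n ℝ) i j ^ 2 *
        (f (hY.eigenvalues j) - f (hX.eigenvalues i)
          - g (hX.eigenvalues i) * (hY.eigenvalues j - hX.eigenvalues i)) := by
  have hfY : cfc f Y = cfc (fun _ : ℝ ↦ (1 : ℝ)) X * cfc f Y := by
    rw [cfc_const_one ℝ X, Matrix.one_mul]
  have hfX : cfc f X = cfc f X * cfc (fun _ : ℝ ↦ (1 : ℝ)) Y := by
    rw [cfc_const_one ℝ Y, Matrix.mul_one]
  have hgX : cfc g X * (Y - X) = cfc g X * cfc (id : ℝ → ℝ) Y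
      - cfc (fun x ↦ g x * x) X * cfc (fun _ : ℝ ↦ (1 : ℝ)) Y := by
    rw [cfc_const_one ℝ Y, Matrix.mul_one,
      cfc_mul g (fun x ↦ x) X (X.finite_real_spectrum.continuousOn g), cfc_id' ℝ X,
      cfc_id ℝ Y, Matrix.mul_sub]
  rw [hfY, hfX, hgX, trace_sub, trace_cfc_mul_cfc hX hY, trace_cfc_mul_cfc hX hY,
    trace_cfc_mul_cfc hX hY, trace_cfc_mul_cfc hX hY]
  simp only [← Finset.sum_sub_distrib]
  exact Finset.sum_congr rfl fun i _ ↦ Finset.sum_congr rfl fun j _ ↦ by simp only [id]; ring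

lemma eq_of_eigenOverlap_ne_zero (hX : X.IsHermitian) (hY : Y.IsHermitian)
    (h : ∀ i j, (hX.eigenOverlap hY : Matrix n n ℝ) i j ≠ 0 →
      hX.eigenvalues i = hY.eigenvalues j) :
    X = Y := by
  set U : Matrix n n ℝ := ↑hX.eigenvectorUnitary
  set V : Matrix n n ℝ := ↑hY.eigenvectorUnitary
  set W : Matrix n n ℝ := ↑(hX.eigenOverlap hY)
  have hW : W = star U * V := rfl
  have hUW : U * W = V := by
    rw [hW, ← Matrix.mul_assoc, Unitary.mul_star_self_of_mem hX.eigenvectorUnitary.2,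
      Matrix.one_mul]
  have hWV : W * star V = star U := by
    rw [hW, Matrix.mul_assoc, Unitary.mul_star_self_of_mem hY.eigenvectorUnitary.2,
      Matrix.mul_one]
  have hcomm : diagonal hX.eigenvalues * W = W * diagonal hY.eigenvalues := by
    ext i j
    rw [diagonal_mul, mul_diagonal]
    by_cases hij : W i j = 0
    · simp [hij]
    · rw [h i j hij, mul_comm]
  calc X = cfc id X := (cfc_id ℝ X).symm
    _ = U * diagonal hX.eigenvalues * (W * star V) := by
        rw [cfc_eq_mul_diagonal_mul hX, hWV]; rfl
    _ = U * W * diagonal hY.eigenvalues * star V := by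
        rw [← Matrix.mul_assoc, Matrix.mul_assoc U, hcomm, ← Matrix.mul_assoc]
    _ = cfc id Y := by rw [hUW, cfc_eq_mul_diagonal_mul hY]; rfl
    _ = Y := cfc_id ℝ Y

/-- Klein's inequality, strict form. -/
theorem trace_cfc_add_trace_cfc_mul_sub_lt (hX : X.IsHermitian) (hY : Y.IsHermitian)
    {f g : ℝ → ℝ}
    (hfg : ∀ x ∈ spectrum ℝ X, ∀ y ∈ spectrum ℝ Y, x ≠ y → f x + g x * (y - x) < f y)
    (hne : X ≠ Y) : (cfc f X).trace + (cfc g X * (Y - X)).trace < (cfc f Y).trace := by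
  set W : Matrix n n ℝ := ↑(hX.eigenOverlap hY)
  set α := hX.eigenvalues
  set β := hY.eigenvalues
  have hgap (i j) (hij : α i ≠ β j) : 0 < f (β j) - f (α i) - g (α i) * (β j - α i) := by
    have := hfg _ (hX.eigenvalues_mem_spectrum_real i) _ (hY.eigenvalues_mem_spectrum_real j) hij
    linarith
  have hterm (i j) : 0 ≤ W i j ^ 2 * (f (β j) - f (α i) - g (α i) * (β j - α i)) := by
    rcases eq_or_ne (α i) (β j) with hij | hij
    · simp [hij]
    · exact mul_nonneg (sq_nonneg _) (hgap i j hij).le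
  obtain ⟨i, j, hWij, hij⟩ : ∃ i j, W i j ≠ 0 ∧ α i ≠ β j := by
    by_contra! h
    exact hne (eq_of_eigenOverlap_ne_zero hX hY h)
  have hpos : 0 < ∑ i, ∑ j, W i j ^ 2 * (f (β j) - f (α i) - g (α i) * (β j - α i)) := by
    refine Finset.sum_pos' (fun i _ ↦ Finset.sum_nonneg fun j _ ↦ hterm i j)
      ⟨i, Finset.mem_univ _, Finset.sum_pos' (fun j _ ↦ hterm i j) ⟨j, Finset.mem_univ _, ?_⟩⟩
    exact mul_pos (by positivity) (hgap i j hij)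
  linarith [trace_cfc_sub_sub_trace_cfc_mul_sub hX hY f g]

end Matrix.IsHermitian

namespace PowerInverseWishart

open scoped MatrixOrder

variable {n : Type*} [Fintype n] [DecidableEq n]

noncomputable def logPosterior (A : Matrix n n ℝ) (q : ℕ) (c : ℝ) (B : Matrix n n ℝ) : ℝ :=
  -(1 / 2) * (A * B + B ^ q).trace + c * Real.log B.det

noncomputable def potential (q : ℕ) (c x : ℝ) : ℝ := x ^ q / 2 - c * Real.log x

noncomputable def potentialDeriv (q : ℕ) (c x : ℝ) : ℝ := q * x ^ (q - 1) / 2 - c * x⁻¹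

lemma potential_add_potentialDeriv_mul_sub_lt (q : ℕ) {c x y : ℝ} (hc : 0 < c) (hx : 0 < x)
    (hy : 0 < y) (hxy : x ≠ y) :
    potential q c x + potentialDeriv q c x * (y - x) < potential q c y := by
  have hpow := pow_add_mul_sub_le_pow hx hy.le q
  have hlog := mul_lt_mul_of_pos_left (Real.log_lt_log_add_inv_mul_sub hx hy hxy) hc
  simp only [potential, potentialDeriv]
  linarith

lemma trace_cfc_potential (q : ℕ) (c : ℝ) {B : Matrix n n ℝ} (hB : B.PosDef) :
    (cfc (potential q c) B).trace = (B ^ q).trace / 2 - c * Real.log B.det := by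
  have hdet : B.det = ∏ i, hB.isHermitian.eigenvalues i := by
    simpa using hB.isHermitian.det_eq_prod_eigenvalues
  rw [hB.isHermitian.trace_cfc, ← cfc_pow_id (R := ℝ) B q, hB.isHermitian.trace_cfc, hdet,
    Real.log_prod fun i _ ↦ (hB.eigenvalues_pos i).ne', Finset.sum_div, Finset.mul_sum,
    ← Finset.sum_sub_distrib]
  rfl

lemma eq_neg_two_smul_cfc_potentialDeriv {q : ℕ} {c : ℝ} {A Y : Matrix n n ℝ}
    (hY : Y.PosDef) (hAY : A * Y + (q : ℝ) • Y ^ q = (2 * c) • 1) :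
    A = (-2 : ℝ) • cfc (potentialDeriv q c) Y := by
  have hcont (f : ℝ → ℝ) : ContinuousOn f (spectrum ℝ Y) := Y.finite_real_spectrum.continuousOn f
  have hscalar : (spectrum ℝ Y).EqOn (fun x ↦ -2 * potentialDeriv q c x * x)
      (fun x ↦ 2 * c - q * x ^ q) := fun x hx ↦ by
    have := (hY.isStrictlyPositive.spectrum_pos hx).ne'
    rcases q with _ | k
    · simp [potentialDeriv]; field_simp
    · simp only [potentialDeriv, Nat.add_sub_cancel, pow_succ]; field_simp; ring
  have hlhs : cfc (fun x ↦ -2 * potentialDeriv q c x * x) Y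
      = ((-2 : ℝ) • cfc (potentialDeriv q c) Y) * Y := by
    rw [cfc_mul (fun x ↦ -2 * potentialDeriv q c x) (fun x ↦ x) Y (hcont _),
      cfc_const_mul _ _ Y (hcont _), cfc_id' ℝ Y]
  have hrhs : cfc (fun x ↦ 2 * c - q * x ^ q) Y = (2 * c) • 1 - (q : ℝ) • Y ^ q := by
    rw [cfc_sub (fun _ ↦ 2 * c) (fun x ↦ q * x ^ q) Y, cfc_const _ Y, cfc_const_mul _ _ Y,
      cfc_pow_id Y q, Algebra.algebraMap_eq_smul_one]
  refine hY.isUnit.mul_right_cancel ?_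
  rw [eq_sub_of_add_eq hAY, ← hrhs, ← cfc_congr hscalar, hlhs]

lemma logPosterior_eq {q : ℕ} {c : ℝ} {A Y B : Matrix n n ℝ} (hY : Y.PosDef)
    (hAY : A * Y + (q : ℝ) • Y ^ q = (2 * c) • 1) (hB : B.PosDef) :
    logPosterior A q c B =
      (cfc (potentialDeriv q c) Y * B).trace - (cfc (potential q c) B).trace := by
  rw [logPosterior, trace_cfc_potential q c hB, eq_neg_two_smul_cfc_potentialDeriv hY hAY,
    trace_add, smul_mul_assoc, trace_smul, smul_eq_mul]
  ring

theorem logPosterior_lt_of_mul_add_smul_pow_eq {q : ℕ} {c : ℝ} (hc : 0 < c)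
    {A Y B : Matrix n n ℝ} (hY : Y.PosDef) (hAY : A * Y + (q : ℝ) • Y ^ q = (2 * c) • 1)
    (hB : B.PosDef) (hne : B ≠ Y) :
    logPosterior A q c B < logPosterior A q c Y := by
  have hklein := hY.isHermitian.trace_cfc_add_trace_cfc_mul_sub_lt hB.isHermitian
    (fun x hx y hy hxy ↦ potential_add_potentialDeriv_mul_sub_lt q hc
      (hY.isStrictlyPositive.spectrum_pos hx) (hB.isStrictlyPositive.spectrum_pos hy) hxy)
    hne.symm
  rw [Matrix.mul_sub, trace_sub] at hklein
  rw [logPosterior_eq hY hAY hB, logPosterior_eq hY hAY hY]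
  linarith

lemma exists_pos_mul_add_mul_pow_eq {d b : ℝ} (hd : 0 ≤ d) (hb : 0 < b) {q : ℕ} (hq : 1 ≤ q) :
    ∃ x, 0 < x ∧ d * x + q * x ^ q = b := by
  set M := max 1 b
  have hM1 : 1 ≤ M := le_max_left _ _
  have hM : b ≤ d * M + q * M ^ q := by
    have : M ≤ q * M ^ q := calc
      M ≤ M ^ q := le_self_pow₀ hM1 (by omega)
      _ ≤ q * M ^ q := le_mul_of_one_le_left (by positivity) (by exact_mod_cast hq)
    nlinarith [le_max_right 1 b, mul_nonneg hd (zero_le_one.trans hM1)]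
  obtain ⟨x, hx, hxb⟩ := intermediate_value_Ioc (zero_le_one.trans hM1)
    (f := fun x ↦ d * x + q * x ^ q) (by fun_prop)
    ⟨by simp [hb, Nat.pos_iff_ne_zero.1 hq], hM⟩
  exact ⟨x, hx.1, hxb⟩

theorem exists_posDef_mul_add_smul_pow_eq {q : ℕ} (hq : 1 ≤ q) {c : ℝ} (hc : 0 < c)
    {A : Matrix n n ℝ} (hA : A.PosSemidef) :
    ∃ Y : Matrix n n ℝ, Y.PosDef ∧ A * Y + (q : ℝ) • Y ^ q = (2 * c) • 1 := by
  have hroot (a) (ha : a ∈ spectrum ℝ A) : ∃ x, 0 < x ∧ a * x + q * x ^ q = 2 * c :=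
    exists_pos_mul_add_mul_pow_eq
      ((posSemidef_iff_isHermitian_and_spectrum_nonneg.1 hA).2 ha) (by positivity) hq
  choose! r hr_pos hr_eq using hroot
  have hcont := A.finite_real_spectrum.continuousOn r
  refine ⟨cfc r A, ?_, ?_⟩
  · rw [← isStrictlyPositive_iff_posDef, cfc_isStrictlyPositive_iff r A hcont]
    exact hr_pos
  · calc A * cfc r A + (q : ℝ) • cfc r A ^ q = cfc (fun a ↦ a * r a + q * r a ^ q) A := by
          rw [cfc_add A _ _ (by fun_prop) (by fun_prop), cfc_mul (fun a ↦ a) r A, cfc_id' ℝ A,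
            cfc_const_mul _ _ A, cfc_pow r q A]
      _ = (2 * c) • 1 := by
          rw [cfc_congr hr_eq, cfc_const _ A, Algebra.algebraMap_eq_smul_one]

end PowerInverseWishart

open PowerInverseWishart in
/-- Let `A` be symmetric positive semidefinite, `q ≥ 1`, `c > 0`.  Then
`l(Υ) = −(1/2)·tr(A·Υ + Υ^q) + c·log det Υ` on positive definite matrices attains a unique
global maximum, and the maximizer is the unique symmetric positive definite solution of
`A·Υ + q·Υ^q = 2c·I`. -/
theorem stmt_15 (p q : ℕ) (hq : 1 ≤ q) (c : ℝ) (hc : 0 < c)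
    (A : Matrix (Fin p) (Fin p) ℝ) (hA : A.PosSemidef) :
    ∃ Υ : Matrix (Fin p) (Fin p) ℝ, Υ.PosDef ∧
      (∀ B : Matrix (Fin p) (Fin p) ℝ, B.PosDef → B ≠ Υ →
        -(1 / 2) * (A * B + B ^ q).trace + c * Real.log B.det <
          -(1 / 2) * (A * Υ + Υ ^ q).trace + c * Real.log Υ.det) ∧
      A * Υ + (q : ℝ) • Υ ^ q = (2 * c) • (1 : Matrix (Fin p) (Fin p) ℝ) ∧
      ∀ B : Matrix (Fin p) (Fin p) ℝ, B.PosDef →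
        A * B + (q : ℝ) • B ^ q = (2 * c) • (1 : Matrix (Fin p) (Fin p) ℝ) → B = Υ := by
  obtain ⟨Υ, hΥ, hAΥ⟩ := exists_posDef_mul_add_smul_pow_eq hq hc hA
  refine ⟨Υ, hΥ, fun B hB hne ↦ logPosterior_lt_of_mul_add_smul_pow_eq hc hΥ hAΥ hB hne, hAΥ,
    fun B hB hAB ↦ ?_⟩
  by_contra hne
  exact lt_asymm (logPosterior_lt_of_mul_add_smul_pow_eq hc hΥ hAΥ hB hne)
    (logPosterior_lt_of_mul_add_smul_pow_eq hc hB hAB hΥ (Ne.symm hne))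
end

section
/- Let S be a real symmetric positive semidefinite p×p matrix, n a positive integer, c > 0 and α > 0 real numbers. Define M = (n/(2c))·(S + R), where R is the unique symmetric positive semidefinite square root of S² + (8α²c/n²)·I. Then M is symmetric positive definite, M commutes with S, and c·M² − n·S·M = 2α²·I. -/
/-!
The positive semidefinite square root is a continuous function of its square, so `R` commutes
with everything that commutes with `R² = S² + t·I`, in particular with `S`; and `R` is invertible
because `R²` is positive definite. Positive definiteness of `M` follows, and the quadratic
equation is then an identity in the commutative algebra generated by `S` and `R`.
-/

open scoped ComplexOrder MatrixOrder Matrix.Norms.L2Operator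

namespace Matrix

variable {n 𝕜 : Type*} [Fintype n] [DecidableEq n] [RCLike 𝕜] {A B : Matrix n n 𝕜}

theorem PosSemidef.commute_of_commute_sq (hA : A.PosSemidef) (h : Commute (A ^ 2) B) :
    Commute A B := by
  rw [← CFC.sqrt_sq A hA.nonneg, CFC.sqrt_eq_cfc]
  exact h.cfc_nnreal _

theorem PosSemidef.posDef_of_posDef_sq (hA : A.PosSemidef) (h : (A ^ 2).PosDef) : A.PosDef :=
  hA.posDef_iff_isUnit.mpr ((isUnit_pow_iff two_ne_zero).mp h.isUnit)

end Matrix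

/-- With `k = n / (2c)` the `S²` and `SR` terms cancel since `2ck² = nk`, leaving
`ck² · 8α²c/n² = 2α²`. -/
theorem Commute.quadratic_eq_of_sq_eq_sq_add {A : Type*} [Ring A] [Algebra ℝ A] {S R : A}
    (hSR : Commute S R) {n c α : ℝ} (hn : n ≠ 0) (hc : c ≠ 0)
    (hR2 : R ^ 2 = S ^ 2 + (8 * α ^ 2 * c / n ^ 2) • 1) :
    c • ((n / (2 * c)) • (S + R)) ^ 2 - n • (S * ((n / (2 * c)) • (S + R))) =
      (2 * α ^ 2) • 1 := by
  rw [smul_pow, hSR.add_sq, two_mul S, add_mul, hR2, mul_smul_comm, mul_add, ← sq]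
  match_scalars <;> field_simp <;> ring

/-- Let `S` be symmetric positive semidefinite, `n` a positive integer, `c > 0`, `α > 0`,
and `M = (n/(2c))·(S + R)` where `R` is the positive semidefinite square root of
`S² + (8α²c/n²)·I`.  Then `M` is positive definite, commutes with `S`, and
`c·M² − n·S·M = 2α²·I`. -/
theorem stmt_16 (p n : ℕ) (hn : 0 < n) (c α : ℝ) (hc : 0 < c) (hα : 0 < α)
    (S R : Matrix (Fin p) (Fin p) ℝ) (hS : S.PosSemidef) (hR : R.PosSemidef)
    (hR2 : R ^ 2 = S ^ 2 + (8 * α ^ 2 * c / (n : ℝ) ^ 2) • (1 : Matrix (Fin p) (Fin p) ℝ)) :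
    (((n : ℝ) / (2 * c)) • (S + R)).PosDef ∧
      ((n : ℝ) / (2 * c)) • (S + R) * S = S * (((n : ℝ) / (2 * c)) • (S + R)) ∧
      c • (((n : ℝ) / (2 * c)) • (S + R)) ^ 2 -
          (n : ℝ) • (S * (((n : ℝ) / (2 * c)) • (S + R))) =
        (2 * α ^ 2) • (1 : Matrix (Fin p) (Fin p) ℝ) := by
  have hRS : Commute R S := hR.commute_of_commute_sq <| by
    rw [hR2]
    exact ((Commute.refl S).pow_left 2).add_left ((Commute.one_left S).smul_left _)
  have hRpd : R.PosDef := hR.posDef_of_posDef_sq <| by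
    rw [hR2]
    exact Matrix.PosDef.posSemidef_add (hS.pow 2) (Matrix.PosDef.one.smul (by positivity))
  refine ⟨(Matrix.PosDef.posSemidef_add hS hRpd).smul (by positivity), ?_, ?_⟩
  · exact (((Commute.refl S).add_left hRS).smul_left _).eq
  · exact hRS.symm.quadratic_eq_of_sq_eq_sq_add (by positivity) hc.ne' hR2
end

section
/- Let S be a real symmetric positive semidefinite p×p matrix, n a positive integer, c > 0 and α > 0 real numbers, and define M = (n/(2c))·(S + R), where R is the unique symmetric positive semidefinite square root of S² + (8α²c/n²)·I. Set β = √2·α/√c. Then M − β·I is positive semidefinite and β·I + (n/c)·S − M is positive semidefinite; that is, β·I ≤ M ≤ β·I + (n/c)·S in the Loewner order. -/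
/-! With `b = 2√2·α·√c / n` one has `R² = S² + b²·I` and `β = (n/(2c))·b`, so both claims reduce
to `b·I ≤ R ≤ S + b·I`. By uniqueness of positive square roots, `R` is `x ↦ √(x² + b²)` applied
to `S` by the continuous functional calculus, and the two bounds become the scalar inequalities
`b ≤ √(x² + b²) ≤ x + b` on the spectrum of `S`, which lies in `[0, ∞)`. -/

section SqrtOfSqAddConst

variable {A : Type*} [PartialOrder A] [Ring A] [StarRing A] [TopologicalSpace A]
  [StarOrderedRing A] [Algebra ℝ A] [ContinuousFunctionalCalculus ℝ A IsSelfAdjoint]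
  [NonnegSpectrumClass ℝ A] [IsSemitopologicalRing A] [T2Space A]

lemma CFC.eq_cfc_sqrt_sq_add_of_sq_eq {s r : A} {b : ℝ} (hs : 0 ≤ s) (hr : 0 ≤ r)
    (h : r ^ 2 = s ^ 2 + algebraMap ℝ A (b ^ 2)) :
    r = cfc (fun x => √(x ^ 2 + b ^ 2)) s := by
  have hsq : cfc (fun x => √(x ^ 2 + b ^ 2)) s ^ 2 = s ^ 2 + algebraMap ℝ A (b ^ 2) :=
    calc cfc (fun x => √(x ^ 2 + b ^ 2)) s ^ 2
        = cfc (fun x => √(x ^ 2 + b ^ 2) ^ 2) s := (cfc_pow _ 2 s).symm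
      _ = cfc (fun x => x ^ 2 + b ^ 2) s := cfc_congr fun x _ => Real.sq_sqrt (by positivity)
      _ = s ^ 2 + algebraMap ℝ A (b ^ 2) := by rw [cfc_add_const (b ^ 2) (· ^ 2) s, cfc_pow_id s 2]
  rw [← CFC.sq_eq_sq_iff r _ hr (cfc_nonneg fun x _ => Real.sqrt_nonneg _), h, hsq]

lemma CFC.algebraMap_le_of_sq_eq_sq_add {s r : A} {b : ℝ} (hs : 0 ≤ s) (hr : 0 ≤ r)
    (h : r ^ 2 = s ^ 2 + algebraMap ℝ A (b ^ 2)) : algebraMap ℝ A b ≤ r := by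
  rw [CFC.eq_cfc_sqrt_sq_add_of_sq_eq hs hr h]
  exact algebraMap_le_cfc _ _ s fun x _ =>
    Real.le_sqrt_of_sq_le (le_add_of_nonneg_left (sq_nonneg x))

lemma CFC.le_add_algebraMap_of_sq_eq_sq_add {s r : A} {b : ℝ} (hb : 0 ≤ b) (hs : 0 ≤ s)
    (hr : 0 ≤ r) (h : r ^ 2 = s ^ 2 + algebraMap ℝ A (b ^ 2)) : r ≤ s + algebraMap ℝ A b := by
  rw [CFC.eq_cfc_sqrt_sq_add_of_sq_eq hs hr h]
  conv_rhs => rw [← cfc_id' ℝ s, ← cfc_add_const b (fun x => x) s]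
  refine cfc_mono fun x hx => Real.sqrt_le_iff.mpr ⟨?_, ?_⟩
  · have := spectrum_nonneg_of_nonneg hs hx
    positivity
  · have := spectrum_nonneg_of_nonneg hs hx
    nlinarith

end SqrtOfSqAddConst

/-- Let `S` be symmetric positive semidefinite, `n` a positive integer, `c > 0`, `α > 0`,
`M = (n/(2c))·(S + R)` with `R` the positive semidefinite square root of
`S² + (8α²c/n²)·I`, and `β = √2·α/√c`.  Then `β·I ≤ M ≤ β·I + (n/c)·S` in the Loewner
order. -/
theorem stmt_17 (p n : ℕ) (hn : 0 < n) (c α : ℝ) (hc : 0 < c) (hα : 0 < α)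
    (S R : Matrix (Fin p) (Fin p) ℝ) (hS : S.PosSemidef) (hR : R.PosSemidef)
    (hR2 : R ^ 2 = S ^ 2 + (8 * α ^ 2 * c / (n : ℝ) ^ 2) • (1 : Matrix (Fin p) (Fin p) ℝ)) :
    (((n : ℝ) / (2 * c)) • (S + R) -
        (Real.sqrt 2 * α / Real.sqrt c) • (1 : Matrix (Fin p) (Fin p) ℝ)).PosSemidef ∧
      ((Real.sqrt 2 * α / Real.sqrt c) • (1 : Matrix (Fin p) (Fin p) ℝ) +
          ((n : ℝ) / c) • S - ((n : ℝ) / (2 * c)) • (S + R)).PosSemidef := by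
  open scoped MatrixOrder in
  have ha : 0 < (n : ℝ) / (2 * c) := by positivity
  obtain ⟨b, hb, hab, hb2⟩ : ∃ b : ℝ, 0 ≤ b ∧ (n : ℝ) / (2 * c) * b = √2 * α / √c ∧
      8 * α ^ 2 * c / (n : ℝ) ^ 2 = b ^ 2 := by
    refine ⟨2 * √2 * α * √c / n, by positivity, ?_, ?_⟩
    · have : 0 < √c := by positivity
      field_simp
      rw [Real.sq_sqrt hc.le]
    · rw [div_pow, mul_pow, mul_pow, mul_pow, Real.sq_sqrt zero_le_two, Real.sq_sqrt hc.le]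
      ring
  rw [hb2, ← Algebra.algebraMap_eq_smul_one] at hR2
  have hlow := CFC.algebraMap_le_of_sq_eq_sq_add hS.nonneg hR.nonneg hR2
  have hup := CFC.le_add_algebraMap_of_sq_eq_sq_add hb hS.nonneg hR.nonneg hR2
  rw [Algebra.algebraMap_eq_smul_one] at hlow hup
  have hnc : (n : ℝ) / c = 2 * ((n : ℝ) / (2 * c)) := by field_simp
  rw [← hab, hnc, ← Matrix.nonneg_iff_posSemidef, ← Matrix.nonneg_iff_posSemidef]
  constructor
  · convert smul_nonneg ha.le (add_nonneg hS.nonneg (sub_nonneg.mpr hlow)) using 1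
    module
  · convert smul_nonneg ha.le (sub_nonneg.mpr hup) using 1
    module
end
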